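/- arXiv:1705.02280 — 8 statements merged into one kernel-verified Lean document; each statement's English description precedes it below -/
import Mathlib

section
/- Let p ∈ (0,1) and let B be a finite simple graph with maximum degree at most ⌊1/p⌋ and with |B| edges. Then the expected maximum matching size of a p-realization of B is at least (|B| / ⌊1/p⌋) · (1 − 3p)/3; in particular it is at least p·|B|·(1 − 3p)/3. -/
/-!
Induct on the number of edges, writing `q = ⌊1/p⌋₊`. Condition on one edge `e = uv` of `B`. If
`e` is dropped, what remains is a `p`-realization of `B - e`. If `e` is kept, it extends any
matching of the kept edges avoiding `e`, and these form a `p`-realization of the edges of `B`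
avoiding `e`, of which there are at least `|B| + 1 - 2q` since `u` and `v` have degree at most `q`.
Hence `E(B) ≥ (1 - p) E(B - e) + p (1 + E(B avoiding e))`, and since `1 - p ≤ pq` the linear
bound `|B| (1 - 3p) / (3q)` survives this recursion. The second bound follows from `pq ≤ 1`.
-/

open scoped Classical symmDiff
open Real

noncomputable section

/-- `E` is the edge set of a simple graph: it contains no loops. -/
def EdgeSimple {V : Type*} (E : Finset (Sym2 V)) : Prop :=
  ∀ e ∈ E, ¬ e.IsDiag

/-- `M` is a matching: it has no loops and distinct edges share no vertex. -/
def IsMatchingSet {V : Type*} (M : Finset (Sym2 V)) : Prop :=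
  (∀ e ∈ M, ¬ e.IsDiag) ∧
    ∀ e ∈ M, ∀ f ∈ M, e ≠ f → ∀ v : V, v ∈ e → v ∉ f

/-- The maximum matching size of the graph with edge set `E`. -/
def matchNum {V : Type*} (E : Finset (Sym2 V)) : ℕ :=
  (E.powerset.filter fun M => IsMatchingSet M).sup Finset.card

/-- The degree of the vertex `v` in the edge set `E`. -/
def edeg {V : Type*} (E : Finset (Sym2 V)) (v : V) : ℕ :=
  (E.filter fun e => v ∈ e).card

/-- The expected maximum matching size of a `p`-realization of `E`, where each
edge of `E` is kept independently with probability `p`. -/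
def expMatch {V : Type*} (p : ℝ) (E : Finset (Sym2 V)) : ℝ :=
  ∑ S ∈ E.powerset, p ^ S.card * (1 - p) ^ (E.card - S.card) * (matchNum S : ℝ)

/-- The set of vertices covered by the edge set `M`. -/
def mVerts {V : Type*} [Fintype V] (M : Finset (Sym2 V)) : Finset V :=
  Finset.univ.filter fun v => ∃ e ∈ M, v ∈ e

section SubsetExpect

variable {α : Type*} (p : ℝ)

/-- The expectation of `f` over the random subset of `E` keeping each element independently
with probability `p`. -/
def subsetExpect (E : Finset α) (f : Finset α → ℝ) : ℝ :=
  ∑ S ∈ E.powerset, p ^ S.card * (1 - p) ^ (E.card - S.card) * f S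

theorem expMatch_eq_subsetExpect (E : Finset (Sym2 α)) :
    expMatch p E = subsetExpect p E fun S => (matchNum S : ℝ) :=
  rfl

theorem subsetExpect_const (E : Finset α) (c : ℝ) : subsetExpect p E (fun _ => c) = c := by
  rw [subsetExpect, ← Finset.sum_mul, Finset.sum_pow_mul_eq_add_pow, add_sub_cancel, one_pow,
    one_mul]

theorem subsetExpect_const_add (E : Finset α) (c : ℝ) (f : Finset α → ℝ) :
    subsetExpect p E (fun S => c + f S) = c + subsetExpect p E f := by
  simp only [subsetExpect, mul_add, Finset.sum_add_distrib]
  rw [← subsetExpect, subsetExpect_const]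

theorem subsetExpect_mono {p : ℝ} (hp0 : 0 ≤ p) (hp1 : p ≤ 1) {E : Finset α}
    {f g : Finset α → ℝ} (h : ∀ S ⊆ E, f S ≤ g S) : subsetExpect p E f ≤ subsetExpect p E g := by
  refine Finset.sum_le_sum fun S hS => mul_le_mul_of_nonneg_left ?_ ?_
  · exact h S (Finset.mem_powerset.1 hS)
  · exact mul_nonneg (pow_nonneg hp0 _) (pow_nonneg (sub_nonneg.2 hp1) _)

theorem subsetExpect_insert [DecidableEq α] {E : Finset α} {a : α} (ha : a ∉ E)
    (f : Finset α → ℝ) :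
    subsetExpect p (insert a E) f =
      (1 - p) * subsetExpect p E f + p * subsetExpect p E (fun S => f (insert a S)) := by
  simp only [subsetExpect, Finset.sum_powerset_insert ha, Finset.mul_sum,
    Finset.card_insert_of_notMem ha]
  congr 1 <;> refine Finset.sum_congr rfl fun S hS => ?_
  · rw [Nat.succ_sub (Finset.card_le_card (Finset.mem_powerset.1 hS)), pow_succ]
    ring
  · rw [Finset.card_insert_of_notMem fun h => ha (Finset.mem_powerset.1 hS h), Nat.succ_sub_succ,
      pow_succ]
    ring

theorem subsetExpect_union_inter [DecidableEq α] {E C : Finset α} (h : Disjoint E C)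
    (f : Finset α → ℝ) :
    subsetExpect p (E ∪ C) (fun S => f (S ∩ E)) = subsetExpect p E f := by
  induction C using Finset.induction_on with
  | empty =>
    simp only [subsetExpect, Finset.union_empty]
    exact Finset.sum_congr rfl fun S hS => by
      rw [Finset.inter_eq_left.2 (Finset.mem_powerset.1 hS)]
  | @insert c C hc ih =>
    have hcE : c ∉ E := Finset.disjoint_right.1 h (Finset.mem_insert_self c C)
    rw [Finset.union_insert, subsetExpect_insert p (by simp [hcE, hc])]
    simp only [Finset.insert_inter_of_notMem hcE]
    rw [ih (h.mono_right (Finset.subset_insert c C))]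
    ring

theorem subsetExpect_inter_of_subset [DecidableEq α] {E F : Finset α} (h : F ⊆ E)
    (f : Finset α → ℝ) :
    subsetExpect p E (fun S => f (S ∩ F)) = subsetExpect p F f := by
  simpa only [Finset.union_sdiff_of_subset h] using
    subsetExpect_union_inter p Finset.disjoint_sdiff (C := E \ F) f

end SubsetExpect

section Matchings

variable {V : Type*}

theorem matchNum_mono {S T : Finset (Sym2 V)} (h : S ⊆ T) : matchNum S ≤ matchNum T :=
  Finset.sup_mono (Finset.filter_subset_filter _ (Finset.powerset_mono.2 h))

theorem exists_isMatchingSet_card_eq_matchNum (S : Finset (Sym2 V)) :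
    ∃ M ⊆ S, IsMatchingSet M ∧ M.card = matchNum S := by
  have hne : (S.powerset.filter fun M => IsMatchingSet M).Nonempty :=
    ⟨∅, Finset.mem_filter.2 ⟨Finset.empty_mem_powerset S, by simp [IsMatchingSet]⟩⟩
  obtain ⟨M, hM, hcard⟩ := Finset.exists_mem_eq_sup _ hne Finset.card
  rw [Finset.mem_filter, Finset.mem_powerset] at hM
  exact ⟨M, hM.1, hM.2, hcard.symm⟩

theorem IsMatchingSet.insert {M : Finset (Sym2 V)} (hM : IsMatchingSet M) {e : Sym2 V}
    (he : ¬ e.IsDiag) (hdisj : ∀ f ∈ M, ∀ v ∈ e, v ∉ f) : IsMatchingSet (insert e M) := by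
  refine ⟨fun f hf => ?_, fun f hf g hg hfg v hvf => ?_⟩
  · rcases Finset.mem_insert.1 hf with rfl | hf
    exacts [he, hM.1 f hf]
  rcases Finset.mem_insert.1 hf with rfl | hfM
  · rcases Finset.mem_insert.1 hg with rfl | hgM
    · exact absurd rfl hfg
    · exact hdisj g hgM v hvf
  · rcases Finset.mem_insert.1 hg with rfl | hgM
    · exact fun hvg => hdisj f hfM v hvg hvf
    · exact hM.2 f hfM g hgM hfg v hvf

theorem matchNum_add_one_le_insert {S : Finset (Sym2 V)} {e : Sym2 V} (he : ¬ e.IsDiag)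
    (heS : e ∉ S) (hdisj : ∀ f ∈ S, ∀ v ∈ e, v ∉ f) : matchNum S + 1 ≤ matchNum (insert e S) := by
  obtain ⟨M, hMS, hM, hcard⟩ := exists_isMatchingSet_card_eq_matchNum S
  have hmem : insert e M ∈ (insert e S).powerset.filter fun M => IsMatchingSet M :=
    Finset.mem_filter.2 ⟨Finset.mem_powerset.2 (Finset.insert_subset_insert e hMS),
      hM.insert he fun f hf => hdisj f (hMS hf)⟩
  have := Finset.le_sup (f := Finset.card) hmem
  rwa [Finset.card_insert_of_notMem fun h => heS (hMS h), hcard] at this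

theorem edeg_mono {E F : Finset (Sym2 V)} (h : E ⊆ F) (v : V) : edeg E v ≤ edeg F v :=
  Finset.card_le_card (Finset.filter_subset_filter _ h)

def edgesAvoiding (E : Finset (Sym2 V)) (e : Sym2 V) : Finset (Sym2 V) :=
  E.filter fun f => ∀ v ∈ e, v ∉ f

theorem edgesAvoiding_subset_erase (E : Finset (Sym2 V)) (e : Sym2 V) :
    edgesAvoiding E e ⊆ E.erase e := by
  intro f hf
  obtain ⟨hfE, hf⟩ := Finset.mem_filter.1 hf
  refine Finset.mem_erase.2 ⟨?_, hfE⟩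
  rintro rfl
  obtain ⟨u, v, rfl⟩ := Sym2.exists.1 ⟨f, rfl⟩
  exact hf u (Sym2.mem_mk_left u v) (Sym2.mem_mk_left u v)

/-- The edges of `E` not avoiding `s(u, v)` are those at `u` or at `v`, and `s(u, v)` is
counted at both. -/
theorem card_add_one_le_card_edgesAvoiding_add_edeg {E : Finset (Sym2 V)} {u v : V}
    (he : s(u, v) ∈ E) : E.card + 1 ≤ (edgesAvoiding E s(u, v)).card + edeg E u + edeg E v := by
  set Eu := E.filter fun f => u ∈ f
  set Ev := E.filter fun f => v ∈ f
  have hcover : E ⊆ edgesAvoiding E s(u, v) ∪ (Eu ∪ Ev) := by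
    intro f hf
    by_cases h : ∀ w ∈ s(u, v), w ∉ f
    · exact Finset.mem_union_left _ (Finset.mem_filter.2 ⟨hf, h⟩)
    · push Not at h
      obtain ⟨w, hw, hwf⟩ := h
      rcases Sym2.mem_iff.1 hw with rfl | rfl
      · exact Finset.mem_union_right _ (Finset.mem_union_left _ (Finset.mem_filter.2 ⟨hf, hwf⟩))
      · exact Finset.mem_union_right _ (Finset.mem_union_right _ (Finset.mem_filter.2 ⟨hf, hwf⟩))
  have hinter : 1 ≤ (Eu ∩ Ev).card :=
    Finset.card_pos.2 ⟨s(u, v), Finset.mem_inter.2 ⟨Finset.mem_filter.2 ⟨he, Sym2.mem_mk_left u v⟩,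
      Finset.mem_filter.2 ⟨he, Sym2.mem_mk_right u v⟩⟩⟩
  have h1 := (Finset.card_le_card hcover).trans (Finset.card_union_le _ _)
  have h2 := Finset.card_union_add_card_inter Eu Ev
  change E.card + 1 ≤ _ + Eu.card + Ev.card
  omega

end Matchings

section Realization

variable {V : Type*} {p : ℝ}

theorem expMatch_nonneg (hp0 : 0 ≤ p) (hp1 : p ≤ 1) (E : Finset (Sym2 V)) :
    0 ≤ expMatch p E := by
  rw [expMatch_eq_subsetExpect]
  simpa only [subsetExpect_const] using
    subsetExpect_mono hp0 hp1 (f := fun _ => 0) (g := fun S => (matchNum S : ℝ))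
      fun S _ => Nat.cast_nonneg _

/-- If the edge `e` is kept, it can be added to any matching of the kept edges avoiding it. -/
theorem expMatch_erase_add_le (hp0 : 0 ≤ p) (hp1 : p ≤ 1) {B : Finset (Sym2 V)} {e : Sym2 V}
    (he : e ∈ B) (hloop : ¬ e.IsDiag) :
    (1 - p) * expMatch p (B.erase e) + p * (1 + expMatch p (edgesAvoiding B e)) ≤
      expMatch p B := by
  set A := B.erase e
  set B' := edgesAvoiding B e
  have hB'A : B' ⊆ A := edgesAvoiding_subset_erase B e
  have hinsert : ∀ S ⊆ A, 1 + (matchNum (S ∩ B') : ℝ) ≤ matchNum (insert e S) := by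
    intro S hS
    have heS : e ∉ S ∩ B' := fun h => Finset.notMem_erase e B (hS (Finset.mem_inter.1 h).1)
    have hdisj : ∀ f ∈ S ∩ B', ∀ v ∈ e, v ∉ f :=
      fun f hf => (Finset.mem_filter.1 (Finset.mem_inter.1 hf).2).2
    have := (matchNum_add_one_le_insert hloop heS hdisj).trans
      (matchNum_mono (Finset.insert_subset_insert e Finset.inter_subset_left))
    rw [add_comm]
    exact_mod_cast this
  calc (1 - p) * expMatch p A + p * (1 + expMatch p B')
      = (1 - p) * expMatch p A +
          p * subsetExpect p A (fun S => 1 + (matchNum (S ∩ B') : ℝ)) := by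
        rw [subsetExpect_const_add, expMatch_eq_subsetExpect p B',
          ← subsetExpect_inter_of_subset p hB'A]
    _ ≤ (1 - p) * expMatch p A + p * subsetExpect p A (fun S => (matchNum (insert e S) : ℝ)) := by
        gcongr
        exact subsetExpect_mono hp0 hp1 hinsert
    _ = expMatch p B := by
        conv_rhs => rw [← Finset.insert_erase he]
        rw [expMatch_eq_subsetExpect p (insert e A),
          subsetExpect_insert p (show e ∉ A from Finset.notMem_erase e B)]
        rfl

/-- One step of the induction: the bound for `B` follows from those for `B.erase e` (with
`m - 1` edges) and for the edges avoiding `e` (with `m' ≥ m + 1 - 2q` edges). -/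
theorem matching_bound_step {q m m' x y : ℝ} (hp : 0 < p) (hp3 : 3 * p ≤ 1)
    (hq : 1 - p ≤ p * q) (hm : m + 1 ≤ m' + 2 * q) (hx : (m - 1) / q * ((1 - 3 * p) / 3) ≤ x)
    (hy : m' / q * ((1 - 3 * p) / 3) ≤ y) :
    m / q * ((1 - 3 * p) / 3) ≤ (1 - p) * x + p * (1 + y) := by
  have hq0 : 0 < q := by
    by_contra! h
    nlinarith
  calc m / q * ((1 - 3 * p) / 3)
      ≤ (1 - p) * ((m - 1) / q * ((1 - 3 * p) / 3)) + p * (1 + m' / q * ((1 - 3 * p) / 3)) := by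
        rw [div_mul_eq_mul_div, div_mul_eq_mul_div, div_mul_eq_mul_div, div_le_iff₀ hq0]
        field_simp
        -- the slack is `p c (m' + 2q - m - 1) + (pq - c (1 - 2p + 2pq))`, `c = (1 - 3p)/3`,
        -- and the second term is nonnegative because `pq ≥ 1 - p`
        nlinarith [mul_nonneg (mul_nonneg hp.le (by linarith : (0 : ℝ) ≤ 1 - 3 * p))
            (by linarith : 0 ≤ m' + 2 * q - m - 1),
          mul_nonneg (by linarith : 0 ≤ p * q - (1 - p)) (by linarith : (0 : ℝ) ≤ 1 + 6 * p),
          mul_nonneg hp.le (by linarith : (0 : ℝ) ≤ 5 - 6 * p)]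
    _ ≤ (1 - p) * x + p * (1 + y) := by gcongr; linarith

theorem card_div_mul_le_expMatch {q : ℕ} (hp : 0 < p) (hp3 : 3 * p ≤ 1) (hq : 1 - p ≤ p * q)
    {B : Finset (Sym2 V)} (hB : EdgeSimple B) (hdeg : ∀ v, edeg B v ≤ q) :
    (B.card : ℝ) / q * ((1 - 3 * p) / 3) ≤ expMatch p B := by
  induction B using Finset.strongInduction with
  | H B ih =>
  rcases B.eq_empty_or_nonempty with rfl | ⟨e, he⟩
  · rw [Finset.card_empty, Nat.cast_zero, zero_div, zero_mul]
    exact expMatch_nonneg hp.le (by linarith) _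
  obtain ⟨u, v, rfl⟩ : ∃ u v, e = s(u, v) := Sym2.exists.1 ⟨e, rfl⟩
  have hA := ih (B.erase s(u, v)) (Finset.erase_ssubset he)
    (fun f hf => hB f (Finset.mem_of_mem_erase hf))
    (fun w => (edeg_mono (Finset.erase_subset _ _) w).trans (hdeg w))
  have hB'sub := edgesAvoiding_subset_erase B s(u, v)
  have hB' := ih (edgesAvoiding B s(u, v)) (hB'sub.trans_ssubset (Finset.erase_ssubset he))
    (fun f hf => hB f (Finset.mem_of_mem_erase (hB'sub hf)))
    (fun w => (edeg_mono (hB'sub.trans (Finset.erase_subset _ _)) w).trans (hdeg w))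
  have hcount : (B.card : ℝ) + 1 ≤ (edgesAvoiding B s(u, v)).card + 2 * q := by
    have := card_add_one_le_card_edgesAvoiding_add_edeg he
    have := hdeg u
    have := hdeg v
    exact_mod_cast (by omega : B.card + 1 ≤ (edgesAvoiding B s(u, v)).card + 2 * q)
  rw [Finset.card_erase_of_mem he, Nat.cast_pred (Finset.card_pos.2 ⟨_, he⟩)] at hA
  exact (matching_bound_step hp hp3 hq hcount hA hB').trans
    (expMatch_erase_add_le hp.le (by linarith) he (hB _ he))

end Realization

theorem b_matching_realization_general {V : Type*}
    (p : ℝ) (hp : 0 < p) (hp1 : p < 1)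
    (B : Finset (Sym2 V)) (hB : EdgeSimple B)
    (hdeg : ∀ v : V, edeg B v ≤ ⌊1 / p⌋₊) :
    (B.card : ℝ) / (⌊1 / p⌋₊ : ℝ) * ((1 - 3 * p) / 3) ≤ expMatch p B ∧
    p * (B.card : ℝ) * ((1 - 3 * p) / 3) ≤ expMatch p B := by
  set q := ⌊1 / p⌋₊
  rcases lt_or_ge (1 - 3 * p) 0 with hp3 | hp3
  · have hnonneg := expMatch_nonneg hp.le hp1.le B
    constructor <;> nlinarith [mul_nonneg hp.le (Nat.cast_nonneg (α := ℝ) B.card),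
      div_nonneg (Nat.cast_nonneg (α := ℝ) B.card) (Nat.cast_nonneg (α := ℝ) q)]
  have hpq : p * q ≤ 1 := by
    have := mul_le_mul_of_nonneg_left (Nat.floor_le (one_div_pos.2 hp).le) hp.le
    rwa [mul_one_div_cancel hp.ne'] at this
  have hpq' : 1 - p ≤ p * q := by
    have := mul_lt_mul_of_pos_left (Nat.lt_floor_add_one (1 / p)) hp
    rw [mul_one_div_cancel hp.ne'] at this
    linarith
  have hmain := card_div_mul_le_expMatch hp (by linarith) hpq' hB hdeg
  refine ⟨hmain, le_trans ?_ hmain⟩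
  have hq0 : (0 : ℝ) < q := by nlinarith
  gcongr
  rw [le_div_iff₀ hq0, mul_right_comm]
  exact mul_le_of_le_one_left (Nat.cast_nonneg _) hpq

theorem b_matching_realization {V : Type*} [Fintype V] [DecidableEq V]
    (p : ℝ) (hp : 0 < p) (hp1 : p < 1)
    (B : Finset (Sym2 V)) (hB : EdgeSimple B)
    (hdeg : ∀ v : V, edeg B v ≤ ⌊1 / p⌋₊) :
    (B.card : ℝ) / (⌊1 / p⌋₊ : ℝ) * ((1 - 3 * p) / 3) ≤ expMatch p B ∧
    p * (B.card : ℝ) * ((1 - 3 * p) / 3) ≤ expMatch p B :=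
  b_matching_realization_general p hp hp1 B hB hdeg
end
end

section
/- Let p ∈ (0, 0.43], let M⁺ be a matching in a finite simple graph containing the edge (u,v), and let C be a set of edges, each having exactly one endpoint in V(M⁺) (the set of vertices covered by M⁺), forming a graph of maximum degree at most ⌊1/p⌋. Let d(u) and d(v) denote the number of edges of C incident on u and on v, respectively, and suppose each edge of C is realized independently with probability p. Define f(x) = (1 − e^{−x})/x. Then with probability at least (1 − p)² · f(1/e) · (p/e²) · (1 − e^{−p·d(v)}) · max{d(u) − 1, 0}, there exist distinct vertices a, b ∉ V(M⁺) such that the edges (a,u) and (v,b) are realized, the only realized edges of C incident on a are among {(a,u),(a,v)}, and the only realized edges of C incident on b are among {(b,u),(b,v)}. -/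
open scoped Classical symmDiff
open Real

noncomputable section

/-- The function `f(x) = (1 - e^{-x}) / x`. -/
def f (x : ℝ) : ℝ := (1 - Real.exp (-x)) / x


/-!
Reveal the realized edges at `v` first. With probability `1 - (1 - p) ^ d(v)` some edge `vb` is
realized. Whatever was revealed, the remaining edges are still independent: all edges at `b`
other than `vb` are absent with probability at least `e⁻¹`, and each of the at least
`d(u) - 1` neighbours `a ≠ b` of `u` independently has `ua` as its only realized edge besides
`va` with probability at least `p / e`; both bounds use `d ≤ 1 / p`. Independence comes from
disjointness: every edge of `C` has exactly one endpoint in `V(M⁺)`, so distinct vertices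
outside `V(M⁺)` share no edge of `C`. This gives the lower bound
`e⁻¹ (1 - (1 - p / e) ^ (d(u) - 1)) (1 - (1 - p) ^ d(v))`, and the concavity of `1 - e^{-x}`
turns it into the stated one.
-/

open Finset

theorem Finset.sdiff_inter_of_disjoint {α : Type*} [DecidableEq α] {s t u : Finset α}
    (h : Disjoint t u) : s \ t ∩ u = s ∩ u :=
  (sdiff_inf_right_comm s u t).trans
    (sdiff_eq_self_of_disjoint (h.symm.mono_left inter_subset_right))

theorem exp_neg_one_le_one_sub_pow {p : ℝ} {n : ℕ} (hp1 : p < 1)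
    (hn : ((n + 1 : ℕ) : ℝ) * p ≤ 1) : Real.exp (-1) ≤ (1 - p) ^ n := by
  push_cast at hn
  have h1p : 0 < 1 - p := by linarith
  have hlog : -(p / (1 - p)) ≤ Real.log (1 - p) := by
    have h := Real.log_le_sub_one_of_pos (inv_pos.2 h1p)
    rw [Real.log_inv] at h
    have : (1 - p)⁻¹ - 1 = p / (1 - p) := by field_simp; ring
    linarith
  have hnp : n * (p / (1 - p)) ≤ 1 := by
    rw [mul_div_assoc', div_le_one h1p]
    linarith
  rw [← Real.exp_log (pow_pos h1p n), Real.log_pow, Real.exp_le_exp]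
  nlinarith [(Nat.cast_nonneg n : (0 : ℝ) ≤ n)]

theorem one_sub_pow_le_exp_neg_mul {p : ℝ} (hp : p ≤ 1) (n : ℕ) :
    (1 - p) ^ n ≤ Real.exp (-p * n) := by
  calc (1 - p) ^ n ≤ Real.exp (-p) ^ n :=
        pow_le_pow_left₀ (by linarith) (Real.one_sub_le_exp_neg p) n
    _ = Real.exp (-p * n) := by rw [← Real.exp_nat_mul]; ring_nf

/-- `f c` is the slope of the chord of the concave function `x ↦ 1 - exp (-x)` over `[0, c]`. -/
theorem mul_f_le_one_sub_exp_neg {c x : ℝ} (hc : 0 < c) (hx0 : 0 ≤ x) (hxc : x ≤ c) :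
    x * f c ≤ 1 - Real.exp (-x) := by
  have ht0 : 0 ≤ x / c := div_nonneg hx0 hc.le
  have ht1 : 0 ≤ 1 - x / c := by rw [sub_nonneg, div_le_one hc]; exact hxc
  have hconv := convexOn_exp.2 (Set.mem_univ (-c)) (Set.mem_univ 0) ht0 ht1 (by ring)
  simp only [smul_eq_mul, mul_zero, add_zero, Real.exp_zero, mul_one] at hconv
  rw [show x / c * -c = -x by field_simp] at hconv
  rw [f, show x * ((1 - Real.exp (-c)) / c) = x / c * (1 - Real.exp (-c)) by ring]
  linarith

namespace RandomSubset

def weight {α : Type*} (p : ℝ) (E S : Finset α) : ℝ := p ^ #S * (1 - p) ^ (#E - #S)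

/-- The probability that the random subset of `E` containing each element independently with
probability `p` satisfies `Q`. -/
def prob {α : Type*} (p : ℝ) (E : Finset α) (Q : Finset α → Prop) : ℝ :=
  ∑ S ∈ E.powerset.filter Q, weight p E S

variable {α : Type*} {p : ℝ} {E B : Finset α} {Q Q' : Finset α → Prop}

theorem weight_nonneg (hp0 : 0 ≤ p) (hp1 : p ≤ 1) (E S : Finset α) : 0 ≤ weight p E S := by
  have : 0 ≤ 1 - p := by linarith
  unfold weight
  positivity

theorem prob_nonneg (hp0 : 0 ≤ p) (hp1 : p ≤ 1) (E : Finset α) (Q : Finset α → Prop) :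
    0 ≤ prob p E Q :=
  sum_nonneg fun S _ => weight_nonneg hp0 hp1 E S

theorem prob_congr (h : ∀ S ⊆ E, Q S ↔ Q' S) : prob p E Q = prob p E Q' := by
  unfold prob
  congr 1
  ext S
  simp only [mem_filter, mem_powerset]
  exact and_congr_right (h S)

theorem prob_mono (hp0 : 0 ≤ p) (hp1 : p ≤ 1) (h : ∀ S ⊆ E, Q S → Q' S) :
    prob p E Q ≤ prob p E Q' := by
  refine sum_le_sum_of_subset_of_nonneg ?_ fun S _ _ => weight_nonneg hp0 hp1 E S
  intro S
  simp only [mem_filter, mem_powerset]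
  exact fun ⟨hS, hQ⟩ => ⟨hS, h S hS hQ⟩

theorem prob_true (p : ℝ) (E : Finset α) : prob p E (fun _ => True) = 1 := by
  rw [prob, filter_true]
  simpa [weight] using sum_pow_mul_eq_add_pow p (1 - p) E

theorem prob_not (p : ℝ) (E : Finset α) (Q : Finset α → Prop) :
    prob p E (fun S => ¬ Q S) = 1 - prob p E Q := by
  rw [eq_sub_iff_add_eq, add_comm, ← prob_true p E, prob, prob, prob, filter_true]
  convert sum_filter_add_sum_filter_not E.powerset Q (weight p E)

theorem prob_le_one (hp0 : 0 ≤ p) (hp1 : p ≤ 1) (E : Finset α) (Q : Finset α → Prop) :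
    prob p E Q ≤ 1 :=
  prob_true p E ▸ prob_mono hp0 hp1 fun _ _ _ => trivial

theorem prob_eq {T : Finset α} (hT : T ⊆ E) : prob p E (· = T) = weight p E T := by
  rw [prob, filter_congr_decidable, filter_eq', if_pos (mem_powerset.2 hT), sum_singleton]

theorem prob_eq_empty (p : ℝ) (E : Finset α) : prob p E (· = ∅) = (1 - p) ^ #E := by
  simp [prob_eq (empty_subset E), weight]

theorem prob_eq_singleton {e : α} (he : e ∈ E) :
    prob p E (· = {e}) = p * (1 - p) ^ (#E - 1) := by
  simp [prob_eq (singleton_subset_iff.2 he), weight]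

variable [DecidableEq α]

theorem weight_eq_mul_weight (hB : B ⊆ E) {S : Finset α} (hS : S ⊆ E) :
    weight p E S = weight p B (S ∩ B) * weight p (E \ B) (S \ B) := by
  have hSB := card_inter_add_card_sdiff S B
  have hEB := card_sdiff_add_card_eq_card hB
  have h1 : #(S ∩ B) ≤ #B := card_le_card inter_subset_right
  have h2 : #(S \ B) ≤ #(E \ B) := card_le_card (sdiff_subset_sdiff hS le_rfl)
  have hexp : #E - #S = (#B - #(S ∩ B)) + (#(E \ B) - #(S \ B)) := by omega
  rw [weight, weight, weight, hexp, ← hSB, pow_add, pow_add]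
  ring

theorem prob_eq_sum_weight_mul_prob (hB : B ⊆ E) (R : Finset α → Prop)
    (Q : Finset α → Finset α → Prop) :
    prob p E (fun S => R (S ∩ B) ∧ Q (S ∩ B) (S \ B)) =
      ∑ T ∈ B.powerset.filter R, weight p B T * prob p (E \ B) (Q T) := by
  simp_rw [prob, mul_sum]
  rw [← sum_finset_product' ((E.powerset.filter fun S => R (S ∩ B) ∧ Q (S ∩ B) (S \ B)).image
    fun S => (S ∩ B, S \ B)) _ _ ?mem, sum_image ?inj]
  · refine sum_congr (by congr) fun S hS => ?_
    exact weight_eq_mul_weight hB (mem_powerset.1 (mem_filter.1 hS).1)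
  case inj =>
    intro S _ S' _ h
    simp only [Prod.mk.injEq] at h
    rw [← sdiff_union_inter S B, ← sdiff_union_inter S' B, h.1, h.2]
  case mem =>
    rintro ⟨T, U⟩
    simp only [mem_image, mem_filter, mem_powerset, Prod.mk.injEq]
    constructor
    · rintro ⟨S, ⟨hSE, hR, hQ⟩, rfl, rfl⟩
      exact ⟨⟨inter_subset_right, hR⟩, sdiff_subset_sdiff hSE le_rfl, hQ⟩
    · rintro ⟨⟨hTB, hR⟩, hUE, hQ⟩
      have hT : (T ∪ U) ∩ B = T := by grind
      have hU : (T ∪ U) \ B = U := by grind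
      exact ⟨T ∪ U, ⟨union_subset (hTB.trans hB) (hUE.trans sdiff_subset), by rwa [hT],
        by rwa [hT, hU]⟩, hT, hU⟩

theorem prob_inter_sdiff (hB : B ⊆ E) (Q₁ Q₂ : Finset α → Prop) :
    prob p E (fun S => Q₁ (S ∩ B) ∧ Q₂ (S \ B)) = prob p B Q₁ * prob p (E \ B) Q₂ :=
  (prob_eq_sum_weight_mul_prob hB Q₁ fun _ => Q₂).trans (by unfold prob; rw [sum_mul])

theorem prob_mul_le_of_forall_le (hp0 : 0 ≤ p) (hp1 : p ≤ 1) (hB : B ⊆ E)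
    (R : Finset α → Prop) (Q : Finset α → Finset α → Prop) {c : ℝ}
    (h : ∀ T ⊆ B, R T → c ≤ prob p (E \ B) (Q T)) :
    prob p B R * c ≤ prob p E (fun S => R (S ∩ B) ∧ Q (S ∩ B) (S \ B)) := by
  rw [prob_eq_sum_weight_mul_prob hB, prob, sum_mul]
  refine sum_le_sum fun T hT => ?_
  rw [mem_filter, mem_powerset] at hT
  exact mul_le_mul_of_nonneg_left (h T hT.1 hT.2) (weight_nonneg hp0 hp1 B T)

variable {ι : Type*} [DecidableEq ι]

theorem prob_forall_mem (s : Finset ι) (B : ι → Finset α) (Q : ι → Finset α → Prop)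
    (hBE : ∀ i ∈ s, B i ⊆ E) (hB : (s : Set ι).PairwiseDisjoint B) :
    prob p E (fun S => ∀ i ∈ s, Q i (S ∩ B i)) = ∏ i ∈ s, prob p (B i) (Q i) := by
  induction s using Finset.induction_on generalizing E with
  | empty =>
    rw [prod_empty, ← prob_true p E]
    exact prob_congr fun S _ => by simp
  | insert i s hi ih =>
    have hBi : ∀ j ∈ s, Disjoint (B i) (B j) := fun j hj =>
      hB (mem_insert_self i s) (mem_insert_of_mem hj) (by rintro rfl; exact hi hj)
    have hBsE : ∀ j ∈ s, B j ⊆ E \ B i := fun j hj =>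
      subset_sdiff.2 ⟨hBE j (mem_insert_of_mem hj), (hBi j hj).symm⟩
    rw [prod_insert hi, ← ih hBsE (hB.subset (by simp)),
      ← prob_inter_sdiff (hBE i (mem_insert_self i s))]
    refine prob_congr fun S _ => ?_
    rw [forall_mem_insert]
    refine and_congr_right fun _ => forall₂_congr fun j hj => ?_
    rw [sdiff_inter_of_disjoint (hBi j hj)]

theorem prob_exists_mem (s : Finset ι) (B : ι → Finset α) (Q : ι → Finset α → Prop)
    (hBE : ∀ i ∈ s, B i ⊆ E) (hB : (s : Set ι).PairwiseDisjoint B) :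
    prob p E (fun S => ∃ i ∈ s, Q i (S ∩ B i)) = 1 - ∏ i ∈ s, (1 - prob p (B i) (Q i)) := by
  have hnone : prob p E (fun S => ∀ i ∈ s, ¬ Q i (S ∩ B i)) =
      1 - prob p E (fun S => ∃ i ∈ s, Q i (S ∩ B i)) := by
    rw [← prob_not]
    exact prob_congr fun S _ => by simp only [not_exists, not_and]
  rw [prod_congr rfl fun i _ => (prob_not p (B i) (Q i)).symm,
    ← prob_forall_mem s B _ hBE hB, hnone]
  ring

end RandomSubset

open RandomSubset

section Graph

variable {V : Type*} {C : Finset (Sym2 V)} {u v w a b : V}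

def incEdges (C : Finset (Sym2 V)) (w : V) : Finset (Sym2 V) :=
  C.filter fun e => w ∈ e

theorem card_incEdges (C : Finset (Sym2 V)) (w : V) : #(incEdges C w) = edeg C w :=
  rfl

theorem mem_incEdges {e : Sym2 V} : e ∈ incEdges C w ↔ e ∈ C ∧ w ∈ e :=
  mem_filter

theorem incEdges_subset (C : Finset (Sym2 V)) (w : V) : incEdges C w ⊆ C :=
  filter_subset _ C

theorem mem_mVerts_of_mem [Fintype V] {M : Finset (Sym2 V)} {e : Sym2 V} (he : e ∈ M)
    (hw : w ∈ e) : w ∈ mVerts M :=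
  mem_filter.2 ⟨mem_univ w, e, he, hw⟩

variable [DecidableEq V]

def otherEdges (C : Finset (Sym2 V)) (v w : V) : Finset (Sym2 V) :=
  (incEdges C w).erase s(v, w)

theorem otherEdges_subset (C : Finset (Sym2 V)) (v w : V) : otherEdges C v w ⊆ C :=
  (erase_subset _ _).trans (incEdges_subset C w)

theorem card_otherEdges_le (C : Finset (Sym2 V)) (v w : V) :
    #(otherEdges C v w) ≤ edeg C w :=
  card_erase_le

theorem card_otherEdges (h : s(v, w) ∈ C) : #(otherEdges C v w) = edeg C w - 1 :=
  card_erase_of_mem (mem_incEdges.2 ⟨h, Sym2.mem_mk_right v w⟩)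

theorem mem_otherEdges (huv : u ≠ v) (h : s(u, w) ∈ C) : s(u, w) ∈ otherEdges C v w :=
  mem_erase.2 ⟨by rwa [Ne, Sym2.congr_left], mem_incEdges.2 ⟨h, Sym2.mem_mk_right u w⟩⟩

theorem disjoint_incEdges_otherEdges (hwv : w ≠ v) :
    Disjoint (incEdges C v) (otherEdges C v w) := by
  refine disjoint_left.2 fun e hv he => ?_
  obtain ⟨hne, he⟩ := mem_erase.1 he
  exact hne ((Sym2.mem_and_mem_iff hwv.symm).1 ⟨(mem_incEdges.1 hv).2, (mem_incEdges.1 he).2⟩)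

theorem eq_or_eq_of_inter_otherEdges_subset {S : Finset (Sym2 V)} (hS : S ⊆ C)
    (h : S ∩ otherEdges C v w ⊆ {s(u, w)}) :
    ∀ e ∈ S, w ∈ e → e = s(w, u) ∨ e = s(w, v) := by
  intro e he hwe
  by_cases hev : e = s(v, w)
  · exact Or.inr (hev.trans Sym2.eq_swap)
  · have : e ∈ S ∩ otherEdges C v w :=
      mem_inter.2 ⟨he, mem_erase.2 ⟨hev, mem_incEdges.2 ⟨hS he, hwe⟩⟩⟩
    exact Or.inl ((mem_singleton.1 (h this)).trans Sym2.eq_swap)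

variable {p : ℝ}

theorem mul_exp_neg_one_le_prob_otherEdges_eq (hp0 : 0 ≤ p) (hp1 : p < 1) (huv : u ≠ v)
    (ha : s(u, a) ∈ C) (hdeg : (edeg C a : ℝ) * p ≤ 1) :
    p * Real.exp (-1) ≤ prob p (otherEdges C v a) (· = {s(u, a)}) := by
  have hmem := mem_otherEdges huv ha
  have hpos : 0 < #(otherEdges C v a) := card_pos.2 ⟨_, hmem⟩
  rw [prob_eq_singleton hmem]
  refine mul_le_mul_of_nonneg_left (exp_neg_one_le_one_sub_pow hp1 ?_) hp0
  rw [Nat.sub_add_cancel hpos]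
  exact le_trans (by gcongr; exact_mod_cast card_otherEdges_le C v a) hdeg

theorem exp_neg_one_le_prob_otherEdges_subset (hp0 : 0 ≤ p) (hp1 : p < 1) (hb : s(v, b) ∈ C)
    (hdeg : (edeg C b : ℝ) * p ≤ 1) :
    Real.exp (-1) ≤ prob p (otherEdges C v b) (· ⊆ {s(u, b)}) := by
  have hpos : 0 < edeg C b := card_pos.2 ⟨_, mem_incEdges.2 ⟨hb, Sym2.mem_mk_right v b⟩⟩
  calc Real.exp (-1) ≤ (1 - p) ^ #(otherEdges C v b) := by
        refine exp_neg_one_le_one_sub_pow hp1 ?_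
        rwa [card_otherEdges hb, Nat.sub_add_cancel hpos]
    _ = prob p (otherEdges C v b) (· = ∅) := (prob_eq_empty p _).symm
    _ ≤ _ := prob_mono hp0 hp1.le fun S _ h => h ▸ empty_subset _

variable [Fintype V] {M : Finset (Sym2 V)}

def neighborFinset (C : Finset (Sym2 V)) (u : V) : Finset V :=
  univ.filter fun a => s(u, a) ∈ C

theorem mem_neighborFinset : a ∈ neighborFinset C u ↔ s(u, a) ∈ C := by
  simp [neighborFinset]

theorem card_neighborFinset (C : Finset (Sym2 V)) (u : V) :
    #(neighborFinset C u) = edeg C u := by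
  refine card_bij (fun a _ => s(u, a))
    (fun a ha => mem_incEdges.2 ⟨mem_neighborFinset.1 ha, Sym2.mem_mk_left u a⟩)
    (fun a _ a' _ h => Sym2.congr_right.1 h) fun e he => ?_
  obtain ⟨heC, hue⟩ := mem_incEdges.1 he
  exact ⟨_, mem_neighborFinset.2 ((Sym2.other_spec hue).symm ▸ heC), Sym2.other_spec hue⟩

theorem notMem_mVerts_of_adj (hC : EdgeSimple C)
    (hone : ∀ e ∈ C, ((mVerts M).filter fun w => w ∈ e).card = 1)
    (hu : u ∈ mVerts M) (h : s(u, w) ∈ C) : w ∉ mVerts M := by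
  intro hw
  have huw : u ≠ w := fun huw => hC _ h (Sym2.mk_isDiag_iff.2 huw)
  have h2 : 1 < ((mVerts M).filter fun x => x ∈ s(u, w)).card :=
    one_lt_card.2 ⟨u, mem_filter.2 ⟨hu, Sym2.mem_mk_left u w⟩, w,
      mem_filter.2 ⟨hw, Sym2.mem_mk_right u w⟩, huw⟩
  exact (hone _ h ▸ h2).false

theorem disjoint_incEdges (hone : ∀ e ∈ C, ((mVerts M).filter fun w => w ∈ e).card = 1)
    (ha : a ∉ mVerts M) (hb : b ∉ mVerts M) (hab : a ≠ b) :
    Disjoint (incEdges C a) (incEdges C b) := by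
  refine disjoint_left.2 fun e hea heb => ?_
  obtain ⟨heC, hae⟩ := mem_incEdges.1 hea
  obtain ⟨x, hx⟩ := card_eq_one.1 (hone e heC)
  obtain ⟨hxM, hxe⟩ := mem_filter.1 (hx ▸ mem_singleton_self x)
  rw [(Sym2.mem_and_mem_iff hab).1 ⟨hae, (mem_incEdges.1 heb).2⟩, Sym2.mem_iff] at hxe
  rcases hxe with rfl | rfl
  exacts [ha hxM, hb hxM]

theorem disjoint_otherEdges (hone : ∀ e ∈ C, ((mVerts M).filter fun w => w ∈ e).card = 1)
    (ha : a ∉ mVerts M) (hb : b ∉ mVerts M) (hab : a ≠ b) :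
    Disjoint (otherEdges C v a) (otherEdges C v b) :=
  (disjoint_incEdges hone ha hb hab).mono (erase_subset _ _) (erase_subset _ _)

theorem otherEdges_subset_sdiff_incEdges (hw : w ∉ mVerts M) (hv : v ∈ mVerts M) :
    otherEdges C v w ⊆ C \ incEdges C v :=
  subset_sdiff.2 ⟨otherEdges_subset C v w,
    (disjoint_incEdges_otherEdges (ne_of_mem_of_not_mem hv hw).symm).symm⟩

theorem one_sub_pow_le_prob_exists_otherEdges_eq (hp0 : 0 ≤ p) (hp1 : p < 1) (huv : u ≠ v)
    (hC : EdgeSimple C) (hone : ∀ e ∈ C, ((mVerts M).filter fun w => w ∈ e).card = 1)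
    (hu : u ∈ mVerts M) {A : Finset V} (hA : A ⊆ neighborFinset C u)
    (hdeg : ∀ a ∈ A, (edeg C a : ℝ) * p ≤ 1) {E : Finset (Sym2 V)}
    (hE : ∀ a ∈ A, otherEdges C v a ⊆ E) :
    1 - (1 - p * Real.exp (-1)) ^ #A ≤
      prob p E (fun S => ∃ a ∈ A, S ∩ otherEdges C v a = {s(u, a)}) := by
  have hAM : ∀ a ∈ A, a ∉ mVerts M := fun a ha =>
    notMem_mVerts_of_adj hC hone hu (mem_neighborFinset.1 (hA ha))
  rw [prob_exists_mem A (otherEdges C v) (fun a X => X = {s(u, a)}) hE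
    fun a ha a' ha' haa' => disjoint_otherEdges hone (hAM a ha) (hAM a' ha') haa', ← prod_const]
  gcongr with a ha
  · exact fun a _ => sub_nonneg.2 (prob_le_one hp0 hp1.le _ _)
  · exact mul_exp_neg_one_le_prob_otherEdges_eq hp0 hp1 huv
      (mem_neighborFinset.1 (hA ha)) (hdeg a ha)

/-- Once `vb` is realized, the realized edges `X` away from `v` complete the augmenting path
`a u v b`. -/
def CompletesPath (C : Finset (Sym2 V)) (u v b : V) (X : Finset (Sym2 V)) : Prop :=
  X ∩ otherEdges C v b ⊆ {s(u, b)} ∧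
    ∃ a ∈ (neighborFinset C u).erase b, X ∩ otherEdges C v a = {s(u, a)}

theorem exp_neg_one_mul_le_prob_completesPath (hp0 : 0 ≤ p) (hp1 : p < 1) (huv : u ≠ v)
    (hC : EdgeSimple C) (hone : ∀ e ∈ C, ((mVerts M).filter fun w => w ∈ e).card = 1)
    (hu : u ∈ mVerts M) (hv : v ∈ mVerts M) (hdeg : ∀ w, (edeg C w : ℝ) * p ≤ 1)
    (hb : s(v, b) ∈ C) :
    Real.exp (-1) * (1 - (1 - p * Real.exp (-1)) ^ (edeg C u - 1)) ≤
      prob p (C \ incEdges C v) (CompletesPath C u v b) := by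
  set A := (neighborFinset C u).erase b
  have hbM : b ∉ mVerts M := notMem_mVerts_of_adj hC hone hv hb
  have hAM : ∀ a ∈ A, a ∉ mVerts M := fun a ha =>
    notMem_mVerts_of_adj hC hone hu (mem_neighborFinset.1 (mem_of_mem_erase ha))
  have hdisj : ∀ a ∈ A, Disjoint (otherEdges C v b) (otherEdges C v a) := fun a ha =>
    disjoint_otherEdges hone hbM (hAM a ha) (ne_of_mem_erase ha).symm
  have hsplit : prob p (C \ incEdges C v) (CompletesPath C u v b) =
      prob p (otherEdges C v b) (· ⊆ {s(u, b)}) * prob p ((C \ incEdges C v) \ otherEdges C v b)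
        (fun Y => ∃ a ∈ A, Y ∩ otherEdges C v a = {s(u, a)}) := by
    rw [← prob_inter_sdiff (otherEdges_subset_sdiff_incEdges hbM hv)]
    exact prob_congr fun X _ => and_congr_right fun _ =>
      exists_congr fun a => and_congr_right fun ha => by rw [sdiff_inter_of_disjoint (hdisj a ha)]
  have hq : p * Real.exp (-1) ≤ p :=
    mul_le_of_le_one_right hp0 (Real.exp_le_one_iff.2 (by norm_num))
  have hq0 : 0 ≤ 1 - p * Real.exp (-1) := by linarith
  have hq1 : 1 - p * Real.exp (-1) ≤ 1 := by linarith [mul_nonneg hp0 (Real.exp_pos (-1)).le]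
  have hcard : edeg C u - 1 ≤ #A := card_neighborFinset C u ▸ pred_card_le_card_erase
  rw [hsplit]
  refine mul_le_mul (exp_neg_one_le_prob_otherEdges_subset hp0 hp1 hb (hdeg b)) ?_
    (sub_nonneg.2 (pow_le_one₀ hq0 hq1)) (prob_nonneg hp0 hp1.le _ _)
  calc 1 - (1 - p * Real.exp (-1)) ^ (edeg C u - 1)
      ≤ 1 - (1 - p * Real.exp (-1)) ^ #A :=
        sub_le_sub_left (pow_le_pow_of_le_one hq0 hq1 hcard) 1
    _ ≤ _ := one_sub_pow_le_prob_exists_otherEdges_eq hp0 hp1 huv hC hone hu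
        (erase_subset b _) (fun a _ => hdeg a) fun a ha => subset_sdiff.2
          ⟨otherEdges_subset_sdiff_incEdges (hAM a ha) hv, (hdisj a ha).symm⟩

theorem exp_neg_one_mul_le_prob_length_three_augmenting (hp0 : 0 ≤ p) (hp1 : p < 1)
    (huv : u ≠ v) (hC : EdgeSimple C)
    (hone : ∀ e ∈ C, ((mVerts M).filter fun w => w ∈ e).card = 1)
    (hu : u ∈ mVerts M) (hv : v ∈ mVerts M) (hdeg : ∀ w, (edeg C w : ℝ) * p ≤ 1) :
    Real.exp (-1) * (1 - (1 - p * Real.exp (-1)) ^ (edeg C u - 1)) * (1 - (1 - p) ^ edeg C v) ≤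
      prob p C (fun S => ∃ a b : V, a ≠ b ∧ a ∉ mVerts M ∧ b ∉ mVerts M ∧
        s(a, u) ∈ S ∧ s(v, b) ∈ S ∧
        (∀ e ∈ S, a ∈ e → e = s(a, u) ∨ e = s(a, v)) ∧
        (∀ e ∈ S, b ∈ e → e = s(b, u) ∨ e = s(b, v))) := by
  have hstar : prob p (incEdges C v) Finset.Nonempty = 1 - (1 - p) ^ edeg C v := by
    rw [← card_incEdges, ← prob_eq_empty, ← prob_not]
    exact prob_congr fun T _ => nonempty_iff_ne_empty
  rw [mul_comm, ← hstar]
  refine (prob_mul_le_of_forall_le hp0 hp1.le (incEdges_subset C v) Finset.Nonempty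
    (fun T X => ∃ b, s(v, b) ∈ T ∧ CompletesPath C u v b X) ?_).trans
    (prob_mono hp0 hp1.le fun S hS ⟨_, b, hvb, hbS, a, ha, haS⟩ => ?_)
  · rintro T hT ⟨e, he⟩
    obtain ⟨heC, hve⟩ := mem_incEdges.1 (hT he)
    rw [← Sym2.other_spec hve] at he heC
    exact (exp_neg_one_mul_le_prob_completesPath hp0 hp1 huv hC hone hu hv hdeg heC).trans
      (prob_mono hp0 hp1.le fun X _ hX => ⟨_, he, hX⟩)
  · have hbM : b ∉ mVerts M := notMem_mVerts_of_adj hC hone hv (hS (mem_inter.1 hvb).1)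
    have haM : a ∉ mVerts M :=
      notMem_mVerts_of_adj hC hone hu (mem_neighborFinset.1 (mem_of_mem_erase ha))
    rw [sdiff_inter_of_disjoint
      (disjoint_incEdges_otherEdges (ne_of_mem_of_not_mem hv hbM).symm)] at hbS
    rw [sdiff_inter_of_disjoint
      (disjoint_incEdges_otherEdges (ne_of_mem_of_not_mem hv haM).symm)] at haS
    have huaS : s(u, a) ∈ S := (mem_inter.1 (haS.symm ▸ mem_singleton_self _)).1
    exact ⟨a, b, ne_of_mem_erase ha, haM, hbM, Sym2.eq_swap ▸ huaS, (mem_inter.1 hvb).1,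
      eq_or_eq_of_inter_otherEdges_subset hS haS.le, eq_or_eq_of_inter_otherEdges_subset hS hbS⟩

end Graph

theorem closed_form_le_exploration_bound {p : ℝ} {m n : ℕ} (hp0 : 0 < p) (hp1 : p < 1)
    (hm : (m : ℝ) * p ≤ 1) :
    (1 - p) ^ 2 * f (1 / Real.exp 1) * (p / Real.exp 1 ^ 2) *
        (1 - Real.exp (-p * (n : ℝ))) * max ((m : ℝ) - 1) 0 ≤
      Real.exp (-1) * (1 - (1 - p * Real.exp (-1)) ^ (m - 1)) * (1 - (1 - p) ^ n) := by
  set q := p * Real.exp (-1) with hq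
  have hq1 : q ≤ 1 := by
    nlinarith [Real.exp_le_one_iff.2 (by norm_num : (-1 : ℝ) ≤ 0), Real.exp_pos (-1)]
  have hmax : max ((m : ℝ) - 1) 0 = ((m - 1 : ℕ) : ℝ) := by
    rcases Nat.eq_zero_or_pos m with rfl | hm0
    · simp
    · rw [Nat.cast_sub hm0, Nat.cast_one]
      exact max_eq_left (sub_nonneg.2 (Nat.one_le_cast.2 hm0))
  have hqm : q * (m - 1 : ℕ) ≤ Real.exp (-1) := by
    have : ((m - 1 : ℕ) : ℝ) * p ≤ 1 := le_trans (by gcongr; exact_mod_cast Nat.sub_le m 1) hm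
    nlinarith [Real.exp_pos (-1)]
  have hF : q * (m - 1 : ℕ) * f (Real.exp (-1)) ≤ 1 - (1 - q) ^ (m - 1) := by
    refine (mul_f_le_one_sub_exp_neg (Real.exp_pos _) (by positivity) hqm).trans ?_
    rw [← neg_mul]
    linarith [one_sub_pow_le_exp_neg_mul hq1 (m - 1)]
  have hD : 1 - Real.exp (-p * n) ≤ 1 - (1 - p) ^ n := by
    linarith [one_sub_pow_le_exp_neg_mul hp1.le n]
  have hF0 : 0 ≤ f (Real.exp (-1)) :=
    div_nonneg (sub_nonneg.2 (Real.exp_le_one_iff.2 (by simp [(Real.exp_pos _).le])))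
      (Real.exp_pos _).le
  have hD0 : 0 ≤ 1 - Real.exp (-p * n) :=
    sub_nonneg.2 (Real.exp_le_one_iff.2 (by nlinarith [(Nat.cast_nonneg n : (0 : ℝ) ≤ n)]))
  have he : 1 / Real.exp 1 = Real.exp (-1) := by rw [Real.exp_neg, one_div]
  have he2 : p / Real.exp 1 ^ 2 = q * Real.exp (-1) := by rw [hq, Real.exp_neg]; field_simp
  rw [he, he2, hmax]
  calc _ = (1 - p) ^ 2 *
        (Real.exp (-1) * (q * (m - 1 : ℕ) * f (Real.exp (-1))) * (1 - Real.exp (-p * n))) := by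
        ring
    _ ≤ 1 * (Real.exp (-1) * (1 - (1 - q) ^ (m - 1)) * (1 - (1 - p) ^ n)) := by
        gcongr
        · exact pow_le_one₀ (by linarith) (by linarith)
        · exact mul_nonneg (Real.exp_pos _).le ((mul_nonneg (by positivity) hF0).trans hF)
    _ = _ := one_mul _

theorem length_three_augmenting_probability {V : Type*} [Fintype V] [DecidableEq V]
    (p : ℝ) (hp : 0 < p) (hp43 : p ≤ 0.43)
    (Mplus : Finset (Sym2 V)) (hMm : IsMatchingSet Mplus)
    (u v : V) (huv : s(u, v) ∈ Mplus)
    (C : Finset (Sym2 V)) (hC : EdgeSimple C)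
    (hone : ∀ e ∈ C, ((mVerts Mplus).filter fun w => w ∈ e).card = 1)
    (hdeg : ∀ w : V, edeg C w ≤ ⌊1 / p⌋₊) :
    (1 - p) ^ 2 * f (1 / Real.exp 1) * (p / Real.exp 1 ^ 2) *
        (1 - Real.exp (-p * (edeg C v : ℝ))) * max ((edeg C u : ℝ) - 1) 0 ≤
      ∑ S ∈ C.powerset.filter (fun S => ∃ a b : V,
            a ≠ b ∧ a ∉ mVerts Mplus ∧ b ∉ mVerts Mplus ∧
            s(a, u) ∈ S ∧ s(v, b) ∈ S ∧
            (∀ e ∈ S, a ∈ e → e = s(a, u) ∨ e = s(a, v)) ∧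
            (∀ e ∈ S, b ∈ e → e = s(b, u) ∨ e = s(b, v))),
        p ^ S.card * (1 - p) ^ (C.card - S.card) := by
  have hp1 : p < 1 := by linarith [show (0.43 : ℝ) < 1 by norm_num]
  have hu : u ∈ mVerts Mplus := mem_mVerts_of_mem huv (Sym2.mem_mk_left u v)
  have hv : v ∈ mVerts Mplus := mem_mVerts_of_mem huv (Sym2.mem_mk_right u v)
  have hne : u ≠ v := fun h => hMm.1 _ huv (Sym2.mk_isDiag_iff.2 h)
  have hdeg' : ∀ w, (edeg C w : ℝ) * p ≤ 1 := fun w =>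
    (le_div_iff₀ hp).1 ((Nat.le_floor_iff (by positivity)).1 (hdeg w))
  refine le_of_le_of_eq ((closed_form_le_exploration_bound hp hp1 (hdeg' u)).trans
    (exp_neg_one_mul_le_prob_length_three_augmenting hp.le hp1 hne hC hone hu hv hdeg')) ?_
  -- `prob` filters with a classical decidability instance, the statement with a constructive one
  unfold prob weight
  congr 2
end
end

section
/- Define f(x) = (1 − e^{−x})/x and η = f(1/e)·(1 − e^{−1})/e². There exist absolute constants C > 0 and p0 ∈ (0,1) such that for every p with 0 < p ≤ p0, every positive integer m, and all vectors d_u, d_v ∈ {0, 1, …, ⌊1/p⌋}^m with Σ_{i=1}^m (d_u(i) + d_v(i)) = s, it holds that f(1/e) · (p/e²) · Σ_{i=1}^m (1 − e^{−p·d_v(i)}) · max{d_u(i) − 1, 0} ≥ η·(p·s − m) − C·(1 + p·(m + p·s)). -/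
/-!
Put `a = p d_u(i)` and `b = p d_v(i)`, both in `[0, 1]` by the cap `⌊1/p⌋`. Then
`a + b - 1 ≤ a b` since `(1 - a)(1 - b) ≥ 0`, and `a b ≤ p² d_v(i) max(d_u(i) - 1, 0) + p`.
Convexity of `exp` gives `1 - e^{-b} ≥ (1 - e^{-1}) b` on `[0, 1]`, which turns the right-hand
side into `η p² Σ d_v(i) max(d_u(i) - 1, 0)`. Summing over `i` leaves an error of `η p m`.
-/
open scoped Classical symmDiff
open Real

noncomputable section

/-- The constant `η = f(1/e) * (1 - e⁻¹) / e²`. -/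
def η : ℝ := f (1 / Real.exp 1) * (1 - Real.exp (-1)) / Real.exp 1 ^ 2

lemma one_sub_exp_neg_one_mul_le {x : ℝ} (h0 : 0 ≤ x) (h1 : x ≤ 1) :
    (1 - exp (-1)) * x ≤ 1 - exp (-x) := by
  have hconv := convexOn_exp.2 (Set.mem_univ 0) (Set.mem_univ (-1)) (sub_nonneg.2 h1) h0
    (sub_add_cancel 1 x)
  simp only [smul_eq_mul, mul_zero, zero_add, mul_neg_one, exp_zero] at hconv
  linarith

lemma f_pos {x : ℝ} (hx : 0 < x) : 0 < f x :=
  div_pos (sub_pos.2 (exp_lt_one_iff.2 (neg_lt_zero.2 hx))) hx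

lemma η_pos : 0 < η :=
  div_pos (mul_pos (f_pos (by positivity)) (sub_pos.2 (exp_lt_one_iff.2 (by norm_num))))
    (by positivity)

lemma mul_le_one_of_le_floor_one_div {p : ℝ} (hp : 0 < p) {n : ℕ} (hn : n ≤ ⌊1 / p⌋₊) :
    p * n ≤ 1 := by
  rw [Nat.le_floor_iff (by positivity), le_div_iff₀ hp] at hn
  linarith

lemma add_sub_one_le_sq_mul_mul_max {p a b : ℝ} (hp : 0 ≤ p) (hb : 0 ≤ b)
    (hpa : p * a ≤ 1) (hpb : p * b ≤ 1) :
    p * (a + b) - 1 ≤ p ^ 2 * b * max (a - 1) 0 + p := by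
  have hprod : p * (a + b) - 1 ≤ (p * a) * (p * b) := by
    nlinarith [mul_nonneg (sub_nonneg.2 hpa) (sub_nonneg.2 hpb)]
  have hmax : p * b * (a - 1) ≤ p * b * max (a - 1) 0 :=
    mul_le_mul_of_nonneg_left (le_max_left _ _) (by positivity)
  nlinarith

lemma η_mul_sq_mul_le {p b M : ℝ} (hp : 0 ≤ p) (hpb0 : 0 ≤ p * b) (hpb1 : p * b ≤ 1)
    (hM : 0 ≤ M) :
    η * p ^ 2 * b * M ≤ f (1 / exp 1) * (p / exp 1 ^ 2) * ((1 - exp (-p * b)) * M) := by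
  have hchord : (1 - exp (-1)) * (p * b) ≤ 1 - exp (-p * b) := by
    rw [neg_mul]
    exact one_sub_exp_neg_one_mul_le hpb0 hpb1
  have hcoef : 0 ≤ f (1 / exp 1) * (p / exp 1 ^ 2) := by
    have := f_pos (x := 1 / exp 1) (by positivity)
    positivity
  calc η * p ^ 2 * b * M
      = f (1 / exp 1) * (p / exp 1 ^ 2) * ((1 - exp (-1)) * (p * b) * M) := by
        unfold η; ring
    _ ≤ f (1 / exp 1) * (p / exp 1 ^ 2) * ((1 - exp (-p * b)) * M) := by gcongr

lemma η_mul_add_sub_one_le {p a b : ℝ} (hp : 0 ≤ p) (hb : 0 ≤ b)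
    (hpa : p * a ≤ 1) (hpb : p * b ≤ 1) :
    η * (p * (a + b) - 1) ≤
      f (1 / exp 1) * (p / exp 1 ^ 2) * ((1 - exp (-p * b)) * max (a - 1) 0) + η * p := by
  have hmain := mul_le_mul_of_nonneg_left
    (add_sub_one_le_sq_mul_mul_max hp hb hpa hpb) η_pos.le
  have hterm := η_mul_sq_mul_le (M := max (a - 1) 0) hp (by positivity) hpb (le_max_right _ _)
  linarith

theorem mp_lower_bound :
    ∃ C : ℝ, 0 < C ∧ ∃ p0 : ℝ, 0 < p0 ∧ p0 < 1 ∧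
      ∀ p : ℝ, 0 < p → p ≤ p0 →
      ∀ m : ℕ, 0 < m →
      ∀ d_u d_v : Fin m → ℕ,
        (∀ i, d_u i ≤ ⌊1 / p⌋₊) → (∀ i, d_v i ≤ ⌊1 / p⌋₊) →
        ∀ s : ℕ, (∑ i, (d_u i + d_v i)) = s →
          η * (p * (s : ℝ) - (m : ℝ)) - C * (1 + p * ((m : ℝ) + p * (s : ℝ))) ≤
            f (1 / Real.exp 1) * (p / Real.exp 1 ^ 2) *
              ∑ i, (1 - Real.exp (-p * (d_v i : ℝ))) * max ((d_u i : ℝ) - 1) 0 := by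
  refine ⟨η, η_pos, 1 / 2, by norm_num, by norm_num, ?_⟩
  intro p hp _ m _ d_u d_v hdu hdv s hs
  have hcoord (i : Fin m) := η_mul_add_sub_one_le hp.le (Nat.cast_nonneg (d_v i))
    (mul_le_one_of_le_floor_one_div hp (hdu i)) (mul_le_one_of_le_floor_one_div hp (hdv i))
  have hsum := Finset.sum_le_sum fun i (_ : i ∈ Finset.univ) => hcoord i
  have hs' : ∑ i, ((d_u i : ℝ) + d_v i) = s := by exact_mod_cast hs
  simp only [← Finset.mul_sum, Finset.sum_add_distrib, Finset.sum_sub_distrib, hs',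
    Finset.sum_const, Finset.card_univ, Fintype.card_fin, nsmul_eq_mul] at hsum
  have herror : η * p * m ≤ η * (1 + p * (m + p * s)) := by
    have := η_pos
    nlinarith [mul_nonneg (mul_nonneg hp.le hp.le) (Nat.cast_nonneg (α := ℝ) s)]
  linarith
end
end

section
/- Let p ∈ (0,1), let b = ⌊1/p⌋ with b ≥ 2, let m be a positive integer, and let D_U, D_V be nonnegative integers with m ≤ D_U ≤ b·m, D_V ≤ b·m, D_U − m divisible by b − 1, and D_V divisible by b. Consider minimizing G(d_u, d_v) = Σ_{i=1}^m (1 − e^{−p·d_v(i)}) · max{d_u(i) − 1, 0} over all pairs of vectors d_u, d_v ∈ {0, 1, …, b}^m with Σ_i d_u(i) = D_U and Σ_i d_v(i) = D_V. Then there exists a minimizer (d_u*, d_v*) such that every entry of d_u* is either 1 or b and every entry of d_v* is either 0 or b. -/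
open scoped Classical symmDiff
open Real

noncomputable section

/-!
Write `q = 1 - e^{-pb}`, `DU = m + (b-1)k` and `DV = bl`. Since `x ↦ 1 - e^{-px}` is concave and
vanishes at `0`, it lies above its chord on `[0, b]`: `b (1 - e^{-px}) ≥ q x`. Combined with
`(b - x)(b - 1 - c) ≥ 0` for `c = max (d_u - 1) 0`, every summand of `G` is bounded below by a
function that is affine in `(c, x)`; summing gives `G ≥ q (b-1) (k + l - m)`. Taking `d_u = b` on the
first `k` coordinates and `d_v = b` on the last `l` ones makes the supports overlap in exactly
`max (k + l - m) 0` coordinates, so this point attains the bound (or `0`).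
-/

open Finset

/-- The objective `G(d_u, d_v)`. -/
def costG {ι : Type*} [Fintype ι] (p : ℝ) (du dv : ι → ℕ) : ℝ :=
  ∑ i, (1 - exp (-p * dv i)) * max ((du i : ℝ) - 1) 0

lemma mul_one_sub_exp_neg_mul_le (p : ℝ) {B x : ℝ} (hB : 0 < B) (hx0 : 0 ≤ x) (hxB : x ≤ B) :
    x * (1 - exp (-p * B)) ≤ B * (1 - exp (-p * x)) := by
  have hconv := convexOn_exp.2 (Set.mem_univ 0) (Set.mem_univ (-p * B))
    (sub_nonneg.2 ((div_le_one hB).2 hxB)) (div_nonneg hx0 hB.le) (sub_add_cancel 1 (x / B))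
  have hpx : x / B * (-p * B) = -p * x := by field_simp
  rw [smul_eq_mul, smul_eq_mul, smul_eq_mul, smul_eq_mul, mul_zero, zero_add, hpx, exp_zero,
    mul_one] at hconv
  have := mul_le_mul_of_nonneg_left hconv hB.le
  rw [mul_add, mul_sub, mul_one, ← mul_assoc, mul_div_cancel₀ x hB.ne'] at this
  linarith

lemma one_sub_exp_neg_mul_nonneg {p x : ℝ} (hp : 0 ≤ p) (hx : 0 ≤ x) :
    0 ≤ 1 - exp (-p * x) := by
  rw [sub_nonneg, exp_le_one_iff]
  nlinarith

lemma costG_nonneg {ι : Type*} [Fintype ι] {p : ℝ} (hp : 0 ≤ p) (du dv : ι → ℕ) :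
    0 ≤ costG p du dv :=
  sum_nonneg fun _ _ =>
    mul_nonneg (one_sub_exp_neg_mul_nonneg hp (Nat.cast_nonneg _)) (le_max_right _ _)

lemma affine_le_mul_one_sub_exp {p b c x : ℝ} (hp : 0 ≤ p) (hb : 0 < b) (hc0 : 0 ≤ c)
    (hcb : c ≤ b - 1) (hx0 : 0 ≤ x) (hxb : x ≤ b) :
    (1 - exp (-p * b)) * (b * c + (b - 1) * x - b * (b - 1)) ≤
      b * ((1 - exp (-p * x)) * c) := by
  have hq := one_sub_exp_neg_mul_nonneg hp hb.le
  have hprod : b * c + (b - 1) * x - b * (b - 1) ≤ x * c := by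
    nlinarith [mul_nonneg (sub_nonneg.2 hxb) (sub_nonneg.2 hcb)]
  calc (1 - exp (-p * b)) * (b * c + (b - 1) * x - b * (b - 1))
      ≤ (x * (1 - exp (-p * b))) * c := by nlinarith [mul_le_mul_of_nonneg_left hprod hq]
    _ ≤ (b * (1 - exp (-p * x))) * c :=
        mul_le_mul_of_nonneg_right (mul_one_sub_exp_neg_mul_le p hb hx0 hxb) hc0
    _ = b * ((1 - exp (-p * x)) * c) := mul_assoc _ _ _

lemma mul_sub_le_costG {ι : Type*} [Fintype ι] {p : ℝ} (hp : 0 ≤ p) {b k l : ℕ} (hb : 1 ≤ b)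
    {du dv : ι → ℕ} (hdu : ∀ i, du i ≤ b) (hdv : ∀ i, dv i ≤ b)
    (hsu : ∑ i, du i = Fintype.card ι + (b - 1) * k) (hsv : ∑ i, dv i = b * l) :
    (1 - exp (-p * b)) * (b - 1) * ((k : ℝ) + l - Fintype.card ι) ≤ costG p du dv := by
  have hbR : (1 : ℝ) ≤ b := by exact_mod_cast hb
  have hterm : ∀ i ∈ univ, (1 - exp (-p * b)) *
      (b * ((du i : ℝ) - 1) + (b - 1) * dv i - b * (b - 1)) ≤
        b * ((1 - exp (-p * dv i)) * max ((du i : ℝ) - 1) 0) := by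
    intro i _
    have hcb : max ((du i : ℝ) - 1) 0 ≤ b - 1 := by
      have : (du i : ℝ) ≤ b := by exact_mod_cast hdu i
      exact max_le (by linarith) (by linarith)
    refine le_trans ?_ (affine_le_mul_one_sub_exp hp (by linarith) (le_max_right _ _) hcb
      (Nat.cast_nonneg _) (by exact_mod_cast hdv i))
    gcongr
    · exact one_sub_exp_neg_mul_nonneg hp (by linarith)
    · exact le_max_left _ _
  have hsum := sum_le_sum hterm
  rw [← mul_sum, ← mul_sum, sum_sub_distrib, sum_add_distrib, ← mul_sum, ← mul_sum,
    sum_sub_distrib, ← Nat.cast_sum, ← Nat.cast_sum, hsu, hsv] at hsum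
  simp only [sum_const, card_univ, nsmul_eq_mul, mul_one] at hsum
  push_cast [Nat.cast_sub hb] at hsum
  rw [costG]
  nlinarith

def stepVec {m : ℕ} (n a c : ℕ) : Fin m → ℕ := fun i => if (i : ℕ) < n then a else c

lemma sum_stepVec {m n : ℕ} (hn : n ≤ m) (a c : ℕ) :
    ∑ i, stepVec (m := m) n a c i = n * a + (m - n) * c := by
  unfold stepVec
  rw [Fin.sum_univ_eq_sum_range (fun i => if i < n then a else c), ← sum_range_add_sum_Ico _ hn,
    sum_congr rfl fun i hi => if_pos (mem_range.1 hi),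
    sum_congr rfl fun i hi => if_neg (not_lt.2 (mem_Ico.1 hi).1)]
  simp only [sum_const, card_range, Nat.card_Ico, smul_eq_mul]

lemma costG_stepVec (p : ℝ) {m b k l : ℕ} (hb : 1 ≤ b) (hk : k ≤ m) :
    costG p (stepVec (m := m) k b 1) (stepVec (m - l) 0 b) =
      (k - (m - l) : ℕ) * ((1 - exp (-p * b)) * (b - 1)) := by
  have hterm : ∀ i : Fin m, (1 - exp (-p * (stepVec (m - l) 0 b i : ℕ))) *
      max ((stepVec k b 1 i : ℕ) - 1 : ℝ) 0 =
        if (i : ℕ) ∈ Ico (m - l) k then (1 - exp (-p * b)) * (b - 1) else 0 := by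
    intro i
    have hbR : (1 : ℝ) ≤ b := by exact_mod_cast hb
    simp only [stepVec, mem_Ico]
    split_ifs <;> first | omega | simp [hbR]
  rw [costG, Fintype.sum_congr _ _ hterm,
    Fin.sum_univ_eq_sum_range (fun i => if i ∈ Ico (m - l) k then _ else 0), sum_ite_mem,
    inter_eq_right.2 fun i hi => mem_range.2 ((mem_Ico.1 hi).2.trans_le hk)]
  simp only [sum_const, Nat.card_Ico, nsmul_eq_mul]

lemma costG_stepVec_le {p : ℝ} (hp : 0 ≤ p) {m b k l : ℕ} (hb : 1 ≤ b) (hk : k ≤ m)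
    (hl : l ≤ m) {du dv : Fin m → ℕ} (hdu : ∀ i, du i ≤ b) (hdv : ∀ i, dv i ≤ b)
    (hsu : ∑ i, du i = m + (b - 1) * k) (hsv : ∑ i, dv i = b * l) :
    costG p (stepVec (m := m) k b 1) (stepVec (m - l) 0 b) ≤ costG p du dv := by
  have hlower := mul_sub_le_costG hp hb hdu hdv (by simpa using hsu) hsv
  rw [costG_stepVec p hb hk]
  rcases le_total k (m - l) with hkl | hkl
  · simpa [Nat.sub_eq_zero_of_le hkl] using costG_nonneg hp du dv
  · rw [Fintype.card_fin] at hlower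
    rw [Nat.cast_sub hkl, Nat.cast_sub hl]
    linarith

theorem minimizer_two_values_general (p : ℝ) (hp : 0 < p)
    (b : ℕ) (hb2 : 2 ≤ b)
    (m : ℕ)
    (DU DV : ℕ) (hDUl : m ≤ DU) (hDUu : DU ≤ b * m) (hDVu : DV ≤ b * m)
    (hdvd1 : (b - 1) ∣ (DU - m)) (hdvd2 : b ∣ DV) :
    ∃ du dv : Fin m → ℕ,
      (∀ i, du i ≤ b) ∧ (∀ i, dv i ≤ b) ∧
      (∑ i, du i) = DU ∧ (∑ i, dv i) = DV ∧
      (∀ du' dv' : Fin m → ℕ,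
        (∀ i, du' i ≤ b) → (∀ i, dv' i ≤ b) →
        (∑ i, du' i) = DU → (∑ i, dv' i) = DV →
        (∑ i, (1 - Real.exp (-p * (dv i : ℝ))) * max ((du i : ℝ) - 1) 0) ≤
          ∑ i, (1 - Real.exp (-p * (dv' i : ℝ))) * max ((du' i : ℝ) - 1) 0) ∧
      (∀ i, du i = 1 ∨ du i = b) ∧ (∀ i, dv i = 0 ∨ dv i = b) := by
  obtain ⟨k, hk⟩ := hdvd1
  obtain ⟨l, rfl⟩ := hdvd2
  have hDU : DU = m + (b - 1) * k := by omega
  have hkm : k ≤ m := by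
    refine Nat.le_of_mul_le_mul_left ?_ (by omega : 0 < b - 1)
    rw [← hk, Nat.sub_one_mul]
    omega
  have hlm : l ≤ m := Nat.le_of_mul_le_mul_left hDVu (by omega)
  refine ⟨stepVec k b 1, stepVec (m - l) 0 b, fun i => ?_, fun i => ?_, ?_, ?_, ?_,
    fun i => ?_, fun i => ?_⟩
  · unfold stepVec; split_ifs <;> omega
  · unfold stepVec; split_ifs <;> omega
  · rw [sum_stepVec hkm, hDU]
    zify [hkm, (by omega : 1 ≤ b)]
    ring
  · rw [sum_stepVec (Nat.sub_le m l), Nat.sub_sub_self hlm]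
    ring
  · exact fun du' dv' hdu hdv hsu hsv =>
      costG_stepVec_le hp.le (by omega) hkm hlm hdu hdv (hsu.trans hDU) hsv
  · unfold stepVec; split_ifs <;> simp
  · unfold stepVec; split_ifs <;> simp

theorem minimizer_two_values (p : ℝ) (hp : 0 < p) (hp1 : p < 1)
    (b : ℕ) (hb : b = ⌊1 / p⌋₊) (hb2 : 2 ≤ b)
    (m : ℕ) (hm : 0 < m)
    (DU DV : ℕ) (hDUl : m ≤ DU) (hDUu : DU ≤ b * m) (hDVu : DV ≤ b * m)
    (hdvd1 : (b - 1) ∣ (DU - m)) (hdvd2 : b ∣ DV) :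
    ∃ du dv : Fin m → ℕ,
      (∀ i, du i ≤ b) ∧ (∀ i, dv i ≤ b) ∧
      (∑ i, du i) = DU ∧ (∑ i, dv i) = DV ∧
      (∀ du' dv' : Fin m → ℕ,
        (∀ i, du' i ≤ b) → (∀ i, dv' i ≤ b) →
        (∑ i, du' i) = DU → (∑ i, dv' i) = DV →
        (∑ i, (1 - Real.exp (-p * (dv i : ℝ))) * max ((du i : ℝ) - 1) 0) ≤
          ∑ i, (1 - Real.exp (-p * (dv' i : ℝ))) * max ((du' i : ℝ) - 1) 0) ∧
      (∀ i, du i = 1 ∨ du i = b) ∧ (∀ i, dv i = 0 ∨ dv i = b) :=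
  minimizer_two_values_general p hp b hb2 m DU DV hDUl hDUu hDVu hdvd1 hdvd2
end
end

section
/- Let m ≥ 1 and b ≥ 1 be integers, let q ∈ ℝ^m have nonnegative entries, let D be a nonnegative integer, and let d* ∈ {0, 1, …, b}^m minimize Σ_{i=1}^m q_i · max{d_i − 1, 0} over all d ∈ {0, 1, …, b}^m with Σ_i d_i = D. Then for every pair of indices i1 ≠ i2 with q_{i1} > q_{i2}, either d*_{i2} = b or d*_{i1} ≤ 1. -/
open scoped Classical symmDiff
open Real

noncomputable section

/-!
Move one unit from `i1` to `i2`. The summand at `i1` drops by exactly `q i1`, since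
`dstar i1 ≥ 2` keeps it on the linear branch of `x ↦ max (x - 1) 0`, while the summand at `i2`
grows by at most `q i2` because that map is `1`-Lipschitz. Hence a minimizer with `q i2 < q i1`,
`dstar i1 ≥ 2` and `dstar i2 < b` could be improved.
-/

section MoveUnit

variable {ι : Type*} [DecidableEq ι]

def moveUnit (d : ι → ℕ) (i j : ι) : ι → ℕ :=
  Function.update (Function.update d i (d i - 1)) j (d j + 1)

variable {d : ι → ℕ} {i j : ι}

theorem moveUnit_apply_left (hij : i ≠ j) : moveUnit d i j i = d i - 1 := by
  simp [moveUnit, hij]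

theorem moveUnit_apply_right : moveUnit d i j j = d j + 1 := by
  simp [moveUnit]

theorem moveUnit_apply_of_ne {k : ι} (hki : k ≠ i) (hkj : k ≠ j) : moveUnit d i j k = d k := by
  simp [moveUnit, hki, hkj]

theorem sum_apply_moveUnit [Fintype ι] {M : Type*} [AddCommGroup M] (f : ι → ℕ → M)
    (hij : i ≠ j) :
    ∑ k, f k (moveUnit d i j k) =
      ∑ k, f k (d k) + (f i (d i - 1) - f i (d i)) + (f j (d j + 1) - f j (d j)) := by
  have hdiff : ∑ k, (f k (moveUnit d i j k) - f k (d k)) =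
      (f i (d i - 1) - f i (d i)) + (f j (d j + 1) - f j (d j)) := by
    rw [Finset.sum_eq_add_of_mem i j (Finset.mem_univ _) (Finset.mem_univ _) hij
      fun k _ hk => by rw [moveUnit_apply_of_ne hk.1 hk.2, sub_self]]
    rw [moveUnit_apply_left hij, moveUnit_apply_right]
  rw [add_assoc, ← hdiff, Finset.sum_sub_distrib]
  abel

theorem sum_moveUnit [Fintype ι] (hij : i ≠ j) (hi : 1 ≤ d i) :
    ∑ k, moveUnit d i j k = ∑ k, d k := by
  have hcast := sum_apply_moveUnit (d := d) (fun _ n => (n : ℤ)) hij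
  have hint : ∑ k, (moveUnit d i j k : ℤ) = ∑ k, (d k : ℤ) := by
    rw [hcast, Nat.cast_sub hi]
    push_cast
    ring
  exact_mod_cast hint

theorem moveUnit_le {b : ℕ} (hd : ∀ k, d k ≤ b) (hj : d j < b) :
    ∀ k, moveUnit d i j k ≤ b := by
  intro k
  unfold moveUnit
  rcases eq_or_ne k j with rfl | hkj
  · simpa using hj
  rcases eq_or_ne k i with rfl | hki
  · simpa [hkj] using (Nat.sub_le _ 1).trans (hd k)
  · simpa [hkj, hki] using hd k

end MoveUnit

theorem max_natCast_pred_sub_one {n : ℕ} (hn : 2 ≤ n) :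
    max (((n - 1 : ℕ) : ℝ) - 1) 0 = max ((n : ℝ) - 1) 0 - 1 := by
  have hn' : (2 : ℝ) ≤ n := by exact_mod_cast hn
  rw [Nat.cast_sub (by omega), Nat.cast_one, max_eq_left (by linarith), max_eq_left (by linarith)]

theorem max_natCast_succ_sub_one_le (n : ℕ) :
    max (((n + 1 : ℕ) : ℝ) - 1) 0 ≤ max ((n : ℝ) - 1) 0 + 1 := by
  push_cast
  exact max_le (by linarith [le_max_left ((n : ℝ) - 1) 0]) (by positivity)

theorem sum_mul_max_moveUnit_lt {ι : Type*} [Fintype ι] [DecidableEq ι] {q : ι → ℝ}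
    {d : ι → ℕ} {i j : ι} (hij : i ≠ j) (hi : 2 ≤ d i) (hqj : 0 ≤ q j) (hq : q j < q i) :
    ∑ k, q k * max ((moveUnit d i j k : ℝ) - 1) 0 < ∑ k, q k * max ((d k : ℝ) - 1) 0 := by
  rw [sum_apply_moveUnit (fun k n => q k * max ((n : ℝ) - 1) 0) hij, max_natCast_pred_sub_one hi]
  have hj := mul_le_mul_of_nonneg_left (max_natCast_succ_sub_one_le (d j)) hqj
  linarith

theorem minimizer_shift_u_general (m b : ℕ)
    (q : Fin m → ℝ) (hq : ∀ i, 0 ≤ q i) (D : ℕ)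
    (dstar : Fin m → ℕ) (hle : ∀ i, dstar i ≤ b) (hsum : (∑ i, dstar i) = D)
    (hmin : ∀ d : Fin m → ℕ, (∀ i, d i ≤ b) → (∑ i, d i) = D →
      (∑ i, q i * max ((dstar i : ℝ) - 1) 0) ≤ ∑ i, q i * max ((d i : ℝ) - 1) 0) :
    ∀ i1 i2 : Fin m, i1 ≠ i2 → q i2 < q i1 → dstar i2 = b ∨ dstar i1 ≤ 1 := by
  intro i1 i2 hne hq12
  by_contra! h
  obtain ⟨h2b, h1⟩ := h
  have hmoved := hmin (moveUnit dstar i1 i2) (moveUnit_le hle (lt_of_le_of_ne (hle i2) h2b))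
    (by rw [sum_moveUnit hne h1.le, hsum])
  exact hmoved.not_gt (sum_mul_max_moveUnit_lt hne h1 (hq i2) hq12)

theorem minimizer_shift_u (m b : ℕ) (hm : 1 ≤ m) (hb : 1 ≤ b)
    (q : Fin m → ℝ) (hq : ∀ i, 0 ≤ q i) (D : ℕ)
    (dstar : Fin m → ℕ) (hle : ∀ i, dstar i ≤ b) (hsum : (∑ i, dstar i) = D)
    (hmin : ∀ d : Fin m → ℕ, (∀ i, d i ≤ b) → (∑ i, d i) = D →
      (∑ i, q i * max ((dstar i : ℝ) - 1) 0) ≤ ∑ i, q i * max ((d i : ℝ) - 1) 0) :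
    ∀ i1 i2 : Fin m, i1 ≠ i2 → q i2 < q i1 → dstar i2 = b ∨ dstar i1 ≤ 1 :=
  minimizer_shift_u_general m b q hq D dstar hle hsum hmin
end
end

section
/- Let p > 0, let m ≥ 1 and b ≥ 1 be integers, let D be a nonnegative integer, and let d* ∈ {0, 1, …, b}^m minimize Σ_{i=1}^m (1 − e^{−p·d_i}) over all d ∈ {0, 1, …, b}^m with Σ_i d_i = D. Then for every pair of indices i1, i2, either min{d*_{i1}, d*_{i2}} = 0 or max{d*_{i1}, d*_{i2}} = b. -/
/-
The objective is separable with summand φ(n) = 1 - exp(-p n), whose increments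
φ(n+1) - φ(n) = (1 - e^{-p}) e^{-pn} are strictly decreasing. If two coordinates had
0 < d_i ≤ d_j < b, moving one unit from d_i to d_j would keep the sum and the box constraints
and change the objective by (φ(d_j+1) - φ(d_j)) - (φ(d_i) - φ(d_i-1)) < 0, contradicting minimality.
-/

open scoped Classical symmDiff
open Real

noncomputable section

section Transfer

variable {ι : Type*} [DecidableEq ι]

def transfer (d : ι → ℕ) (i j : ι) : ι → ℕ :=
  Function.update (Function.update d i (d i - 1)) j (d j + 1)

theorem transfer_le {d : ι → ℕ} {b : ℕ} (hd : ∀ k, d k ≤ b) {i j : ι} (hj : d j < b) (k : ι) :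
    transfer d i j k ≤ b := by
  unfold transfer
  simp only [Function.update_apply]
  split_ifs <;> grind

variable [Fintype ι]

theorem sum_update_update_add {M : Type*} [AddCommMonoid M] (f : ι → M) {i j : ι} (hij : i ≠ j)
    (x y : M) :
    ∑ k, Function.update (Function.update f i x) j y k + (f i + f j) = ∑ k, f k + (x + y) := by
  have hi : i ∈ Finset.univ \ {j} := by simpa using hij
  rw [Finset.sum_update_of_mem (Finset.mem_univ j), Finset.sum_update_of_mem hi,
    Finset.sum_eq_add_sum_sdiff_singleton_of_mem (Finset.mem_univ j),
    Finset.sum_eq_add_sum_sdiff_singleton_of_mem hi]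
  abel

theorem sum_transfer {d : ι → ℕ} {i j : ι} (hij : i ≠ j) (hi : 0 < d i) :
    ∑ k, transfer d i j k = ∑ k, d k := by
  have := sum_update_update_add d hij (d i - 1) (d j + 1)
  unfold transfer
  omega

theorem sum_comp_transfer_lt {φ : ℕ → ℝ} (hφ : StrictAnti fun n => φ (n + 1) - φ n)
    {d : ι → ℕ} {i j : ι} (hij : i ≠ j) (hi : 0 < d i) (hdij : d i ≤ d j) :
    ∑ k, φ (transfer d i j k) < ∑ k, φ (d k) := by
  have hsum := sum_update_update_add (φ ∘ d) hij (φ (d i - 1)) (φ (d j + 1))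
  rw [← Function.comp_update, ← Function.comp_update] at hsum
  have hinc : φ (d j + 1) - φ (d j) < φ (d i - 1 + 1) - φ (d i - 1) := hφ (by omega)
  rw [Nat.sub_add_cancel hi] at hinc
  simp only [Function.comp_apply] at hsum
  unfold transfer
  linarith

theorem eq_zero_or_eq_of_le_of_isMinimizer {φ : ℕ → ℝ} (hφ : StrictAnti fun n => φ (n + 1) - φ n)
    {b : ℕ} {d : ι → ℕ} (hd : ∀ k, d k ≤ b)
    (hmin : ∀ e : ι → ℕ, (∀ k, e k ≤ b) → ∑ k, e k = ∑ k, d k →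
      ∑ k, φ (d k) ≤ ∑ k, φ (e k))
    {i j : ι} (hij : i ≠ j) (hdij : d i ≤ d j) : d i = 0 ∨ d j = b := by
  by_contra! h
  obtain ⟨hi, hj⟩ := h
  have hi_pos := Nat.pos_of_ne_zero hi
  exact (sum_comp_transfer_lt hφ hij hi_pos hdij).not_ge
    (hmin _ (transfer_le hd ((hd j).lt_of_ne hj)) (sum_transfer hij hi_pos))

theorem min_eq_zero_or_max_eq_of_isMinimizer {φ : ℕ → ℝ}
    (hφ : StrictAnti fun n => φ (n + 1) - φ n) {b : ℕ} {d : ι → ℕ} (hd : ∀ k, d k ≤ b)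
    (hmin : ∀ e : ι → ℕ, (∀ k, e k ≤ b) → ∑ k, e k = ∑ k, d k →
      ∑ k, φ (d k) ≤ ∑ k, φ (e k))
    {i j : ι} (hij : i ≠ j) : min (d i) (d j) = 0 ∨ max (d i) (d j) = b := by
  rcases le_total (d i) (d j) with h | h
  · rcases eq_zero_or_eq_of_le_of_isMinimizer hφ hd hmin hij h with h' | h' <;> omega
  · rcases eq_zero_or_eq_of_le_of_isMinimizer hφ hd hmin hij.symm h with h' | h' <;> omega

end Transfer

theorem strictAnti_one_sub_exp_succ_sub {p : ℝ} (hp : 0 < p) :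
    StrictAnti fun n : ℕ => (1 - exp (-p * ((n + 1 : ℕ) : ℝ))) - (1 - exp (-p * n)) := by
  have hinc (n : ℕ) : (1 - exp (-p * ((n + 1 : ℕ) : ℝ))) - (1 - exp (-p * n)) =
      (1 - exp (-p)) * exp (-p * n) := by
    rw [Nat.cast_succ, show -p * (n + 1) = -p * n + -p by ring, exp_add]
    ring
  intro k l hkl
  simp only [hinc]
  have hcast : (k : ℝ) < l := by exact_mod_cast hkl
  exact mul_lt_mul_of_pos_left (exp_lt_exp.2 (by nlinarith)) (by simpa using hp)

theorem minimizer_shift_v_general (p : ℝ) (hp : 0 < p) (m b : ℕ)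
    (D : ℕ)
    (dstar : Fin m → ℕ) (hle : ∀ i, dstar i ≤ b) (hsum : (∑ i, dstar i) = D)
    (hmin : ∀ d : Fin m → ℕ, (∀ i, d i ≤ b) → (∑ i, d i) = D →
      (∑ i, (1 - Real.exp (-p * (dstar i : ℝ)))) ≤ ∑ i, (1 - Real.exp (-p * (d i : ℝ)))) :
    ∀ i1 i2 : Fin m, i1 ≠ i2 →
      min (dstar i1) (dstar i2) = 0 ∨ max (dstar i1) (dstar i2) = b := by
  intro i1 i2 hne
  exact min_eq_zero_or_max_eq_of_isMinimizer (φ := fun n : ℕ => 1 - exp (-p * n))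
    (strictAnti_one_sub_exp_succ_sub hp) hle (fun d hd hd_sum => hmin d hd (hd_sum.trans hsum)) hne

theorem minimizer_shift_v (p : ℝ) (hp : 0 < p) (m b : ℕ) (hm : 1 ≤ m) (hb : 1 ≤ b)
    (D : ℕ)
    (dstar : Fin m → ℕ) (hle : ∀ i, dstar i ≤ b) (hsum : (∑ i, dstar i) = D)
    (hmin : ∀ d : Fin m → ℕ, (∀ i, d i ≤ b) → (∑ i, d i) = D →
      (∑ i, (1 - Real.exp (-p * (dstar i : ℝ)))) ≤ ∑ i, (1 - Real.exp (-p * (d i : ℝ)))) :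
    ∀ i1 i2 : Fin m, i1 ≠ i2 →
      min (dstar i1) (dstar i2) = 0 ∨ max (dstar i1) (dstar i2) = b :=
  minimizer_shift_v_general p hp m b D dstar hle hsum hmin
end
end

section
/- Let p ∈ (0,1), ε ≥ 0, and let t > 0 be a real number. Let G be a finite simple graph, let M be a maximum matching of G with |M| ≥ t, and let M' be a matching in G, edge-disjoint from M, whose size equals (1/2 − p²/4 − ε)·t (assumed to be a nonnegative integer). If each edge of M is realized independently with probability p, then the expected maximum matching size of the graph consisting of M' together with the realized edges of M is at least (1/2 + p²/4 − ε)·t. -/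
open scoped Classical symmDiff
open Real

noncomputable section

/-! Realize the edges of `M` and, next to the realized edges `S`, keep every edge of `M'` that
meets no edge of `S`; together they form a matching. In expectation `S` has `p |M|` edges, and an
edge of `M'` meets at most two edges of the matching `M`, so it survives with probability at least
`(1 - p)²`. Hence the expected matching number is at least `p t + (1/2 - p²/4 - ε) t (1 - p)²`,
which exceeds `(1/2 + p²/4 - ε) t` by `p t (p² (2 - p) / 4 + ε (2 - p)) ≥ 0`. -/

open Finset

section Realization

variable {α : Type*}

/-- The expectation of `f S` when `S` is a `p`-realization of `A`. -/
def realizationExp (p : ℝ) (A : Finset α) (f : Finset α → ℝ) : ℝ :=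
  ∑ S ∈ A.powerset, p ^ S.card * (1 - p) ^ (A.card - S.card) * f S

variable {p : ℝ} {A : Finset α}

theorem realizationExp_const (c : ℝ) : realizationExp p A (fun _ => c) = c := by
  rw [realizationExp, ← sum_mul, sum_pow_mul_eq_add_pow, add_sub_cancel, one_pow, one_mul]

theorem realizationExp_add (f g : Finset α → ℝ) :
    realizationExp p A (fun S => f S + g S) = realizationExp p A f + realizationExp p A g := by
  simp only [realizationExp, mul_add, sum_add_distrib]

theorem realizationExp_sum {β : Type*} (F : Finset β) (f : β → Finset α → ℝ) :
    realizationExp p A (fun S => ∑ g ∈ F, f g S) = ∑ g ∈ F, realizationExp p A (f g) := by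
  simp only [realizationExp, mul_sum]
  exact sum_comm

theorem realizationExp_congr {f g : Finset α → ℝ} (h : ∀ S ⊆ A, f S = g S) :
    realizationExp p A f = realizationExp p A g :=
  sum_congr rfl fun S hS => by rw [h S (mem_powerset.1 hS)]

theorem realizationExp_mono (hp : 0 ≤ p) (hp1 : p ≤ 1) {f g : Finset α → ℝ}
    (h : ∀ S ⊆ A, f S ≤ g S) : realizationExp p A f ≤ realizationExp p A g :=
  sum_le_sum fun S hS => mul_le_mul_of_nonneg_left (h S (mem_powerset.1 hS))
    (mul_nonneg (pow_nonneg hp _) (pow_nonneg (sub_nonneg.2 hp1) _))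

theorem realizationExp_disjoint [DecidableEq α] {T : Finset α} (hT : T ⊆ A) :
    realizationExp p A (fun S => if Disjoint S T then 1 else 0) = (1 - p) ^ T.card := by
  have hsplit : A.powerset.filter (fun S => Disjoint S T) = (A \ T).powerset := by
    ext S
    simp only [mem_filter, mem_powerset, subset_sdiff]
  have hweight : ∀ S ∈ (A \ T).powerset, p ^ S.card * (1 - p) ^ (A.card - S.card)
      = (1 - p) ^ T.card * (p ^ S.card * (1 - p) ^ ((A \ T).card - S.card)) := by
    intro S hS
    have := card_le_card (mem_powerset.1 hS)
    rw [card_sdiff_of_subset hT] at this ⊢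
    have := card_le_card hT
    rw [mul_left_comm, ← pow_add]
    congr 3
    omega
  simp only [realizationExp, mul_ite, mul_one, mul_zero]
  rw [← sum_filter, hsplit, sum_congr rfl hweight, ← mul_sum, sum_pow_mul_eq_add_pow,
    add_sub_cancel, one_pow, mul_one]

theorem realizationExp_card_filter_disjoint [DecidableEq α] {β : Type*} (F : Finset β)
    (T : β → Finset α) (hT : ∀ g ∈ F, T g ⊆ A) :
    realizationExp p A (fun S => ((F.filter fun g => Disjoint S (T g)).card : ℝ))
      = ∑ g ∈ F, (1 - p) ^ (T g).card := by
  simp only [card_filter, Nat.cast_sum, Nat.cast_ite, Nat.cast_one, Nat.cast_zero]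
  rw [realizationExp_sum]
  exact sum_congr rfl fun g hg => realizationExp_disjoint (hT g hg)

theorem realizationExp_card [DecidableEq α] :
    realizationExp p A (fun S => (S.card : ℝ)) = p * A.card := by
  have hcompl : ∀ S ⊆ A,
      (S.card : ℝ) + ((A.filter fun e => Disjoint S {e}).card : ℝ) = A.card := by
    intro S hS
    have : A.filter (fun e => Disjoint S {e}) = A \ S := by
      ext e
      simp [disjoint_singleton_right, mem_sdiff]
    rw [this, card_sdiff_of_subset hS, Nat.cast_sub (card_le_card hS)]
    ring
  have hsum := realizationExp_congr (p := p) hcompl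
  rw [realizationExp_add, realizationExp_const,
    realizationExp_card_filter_disjoint A _ fun e he => singleton_subset_iff.2 he] at hsum
  simp only [card_singleton, pow_one, sum_const, nsmul_eq_mul] at hsum
  linarith

end Realization

section Matching

variable {V : Type*} {M : Finset (Sym2 V)}

def touching (M : Finset (Sym2 V)) (g : Sym2 V) : Finset (Sym2 V) :=
  M.filter fun e => ∃ v ∈ g, v ∈ e

theorem IsMatchingSet.card_filter_mem_le_one (hM : IsMatchingSet M) (v : V) :
    (M.filter fun e => v ∈ e).card ≤ 1 :=
  card_le_one.2 fun e he f hf => by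
    rw [mem_filter] at he hf
    by_contra hef
    exact hM.2 e he.1 f hf.1 hef v he.2 hf.2

theorem IsMatchingSet.card_touching_le_two (hM : IsMatchingSet M) (g : Sym2 V) :
    (touching M g).card ≤ 2 := by
  induction g using Sym2.inductionOn with
  | hf x y =>
    have hsub :
        touching M s(x, y) ⊆ (M.filter fun e => x ∈ e) ∪ (M.filter fun e => y ∈ e) := by
      intro e he
      simp only [touching, mem_filter, Sym2.mem_iff] at he
      obtain ⟨heM, v, rfl | rfl, hve⟩ := he
      · exact mem_union_left _ (mem_filter.2 ⟨heM, hve⟩)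
      · exact mem_union_right _ (mem_filter.2 ⟨heM, hve⟩)
    calc (touching M s(x, y)).card
        ≤ (M.filter fun e => x ∈ e).card + (M.filter fun e => y ∈ e).card :=
          (card_le_card hsub).trans (card_union_le _ _)
      _ ≤ 1 + 1 := add_le_add (hM.card_filter_mem_le_one x) (hM.card_filter_mem_le_one y)

theorem IsMatchingSet.mono {S : Finset (Sym2 V)} (hM : IsMatchingSet M) (hS : S ⊆ M) :
    IsMatchingSet S :=
  ⟨fun e he => hM.1 e (hS he), fun e he f hf => hM.2 e (hS he) f (hS hf)⟩

theorem IsMatchingSet.union [DecidableEq V] {S F : Finset (Sym2 V)} (hS : IsMatchingSet S)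
    (hF : IsMatchingSet F) (hSF : ∀ e ∈ S, ∀ f ∈ F, ∀ v ∈ e, v ∉ f) :
    IsMatchingSet (S ∪ F) := by
  refine ⟨fun e he => (mem_union.1 he).elim (hS.1 e) (hF.1 e), fun e he f hf hef v hve => ?_⟩
  rcases mem_union.1 he with heS | heF <;> rcases mem_union.1 hf with hfS | hfF
  · exact hS.2 e heS f hfS hef v hve
  · exact hSF e heS f hfF v hve
  · exact fun hvf => hSF f hfS e heF v hvf hve
  · exact hF.2 e heF f hfF hef v hve

theorem card_le_matchNum {E N : Finset (Sym2 V)} (hNE : N ⊆ E) (hN : IsMatchingSet N) :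
    N.card ≤ matchNum E :=
  le_sup (f := card) (mem_filter.2 ⟨mem_powerset.2 hNE, hN⟩)

/-- `S` together with the edges of `M'` that meet no edge of `S` is a matching inside `M' ∪ S`. -/
theorem card_add_card_untouched_le_matchNum [DecidableEq V] {M' S : Finset (Sym2 V)}
    (hM : IsMatchingSet M) (hM' : IsMatchingSet M') (hdisj : Disjoint M M') (hS : S ⊆ M) :
    S.card + (M'.filter fun g => Disjoint S (touching M g)).card ≤ matchNum (M' ∪ S) := by
  set F := M'.filter fun g => Disjoint S (touching M g)
  have hFM' : F ⊆ M' := filter_subset _ _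
  have hSF : ∀ e ∈ S, ∀ f ∈ F, ∀ v ∈ e, v ∉ f := fun e he f hf v hve hvf =>
    disjoint_left.1 (mem_filter.1 hf).2 he (mem_filter.2 ⟨hS he, v, hvf, hve⟩)
  rw [← card_union_of_disjoint (hdisj.mono hS hFM')]
  exact card_le_matchNum (union_subset subset_union_right (hFM'.trans subset_union_left))
    ((hM.mono hS).union (hM'.mono hFM') hSF)

theorem realizationExp_matchNum_ge [DecidableEq V] {p : ℝ} (hp : 0 ≤ p) (hp1 : p ≤ 1)
    {M' : Finset (Sym2 V)} (hM : IsMatchingSet M) (hM' : IsMatchingSet M')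
    (hdisj : Disjoint M M') :
    p * M.card + M'.card * (1 - p) ^ 2 ≤ realizationExp p M (fun S => matchNum (M' ∪ S)) := by
  have hsurvive : ∀ g ∈ M', (1 - p) ^ 2 ≤ (1 - p) ^ (touching M g).card := fun g _ =>
    pow_le_pow_of_le_one (by linarith) (by linarith) (hM.card_touching_le_two g)
  calc p * M.card + M'.card * (1 - p) ^ 2
      ≤ p * M.card + ∑ g ∈ M', (1 - p) ^ (touching M g).card := by
        rw [← nsmul_eq_mul]
        gcongr
        exact card_nsmul_le_sum _ _ _ hsurvive
    _ = realizationExp p M (fun S =>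
          S.card + ((M'.filter fun g => Disjoint S (touching M g)).card : ℝ)) := by
        rw [← realizationExp_card,
          ← realizationExp_card_filter_disjoint M' (touching M) fun g _ => filter_subset _ _,
          ← realizationExp_add]
    _ ≤ realizationExp p M (fun S => matchNum (M' ∪ S)) :=
        realizationExp_mono hp hp1 fun S hS => by
          exact_mod_cast card_add_card_untouched_le_matchNum hM hM' hdisj hS

end Matching

theorem augment_maximum_matching_general {V : Type*} [DecidableEq V]
    (p : ℝ) (hp : 0 < p) (hp1 : p < 1) (ε : ℝ) (hε : 0 ≤ ε)
    (t : ℝ) (ht : 0 < t)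
    (M M' : Finset (Sym2 V))
    (hMm : IsMatchingSet M)
    (hMt : t ≤ (M.card : ℝ))
    (hM'm : IsMatchingSet M') (hdisj : Disjoint M M')
    (hM'card : (M'.card : ℝ) = (1 / 2 - p ^ 2 / 4 - ε) * t) :
    (1 / 2 + p ^ 2 / 4 - ε) * t ≤
      ∑ S ∈ M.powerset,
        p ^ S.card * (1 - p) ^ (M.card - S.card) * (matchNum (M' ∪ S) : ℝ) := by
  have hgain : p * t + (1 / 2 - p ^ 2 / 4 - ε) * t * (1 - p) ^ 2 - (1 / 2 + p ^ 2 / 4 - ε) * t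
      = p * t * ((2 - p) * (p ^ 2 / 4 + ε)) := by ring
  have hgain_nonneg : 0 ≤ (2 - p) * (p ^ 2 / 4 + ε) := by
    have : 0 ≤ 2 - p := by linarith
    positivity
  calc (1 / 2 + p ^ 2 / 4 - ε) * t
      ≤ p * t + (1 / 2 - p ^ 2 / 4 - ε) * t * (1 - p) ^ 2 := by
        linarith [mul_nonneg (mul_nonneg hp.le ht.le) hgain_nonneg]
    _ ≤ p * M.card + M'.card * (1 - p) ^ 2 := by
        rw [hM'card]
        gcongr
    _ ≤ realizationExp p M (fun S => matchNum (M' ∪ S)) :=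
        realizationExp_matchNum_ge hp.le hp1.le hMm hM'm hdisj

theorem augment_maximum_matching {V : Type*} [Fintype V] [DecidableEq V]
    (p : ℝ) (hp : 0 < p) (hp1 : p < 1) (ε : ℝ) (hε : 0 ≤ ε)
    (t : ℝ) (ht : 0 < t)
    (E M M' : Finset (Sym2 V)) (hE : EdgeSimple E)
    (hME : M ⊆ E) (hMm : IsMatchingSet M)
    (hmax : ∀ N : Finset (Sym2 V), N ⊆ E → IsMatchingSet N → N.card ≤ M.card)
    (hMt : t ≤ (M.card : ℝ))
    (hM'E : M' ⊆ E) (hM'm : IsMatchingSet M') (hdisj : Disjoint M M')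
    (hM'card : (M'.card : ℝ) = (1 / 2 - p ^ 2 / 4 - ε) * t) :
    (1 / 2 + p ^ 2 / 4 - ε) * t ≤
      ∑ S ∈ M.powerset,
        p ^ S.card * (1 - p) ^ (M.card - S.card) * (matchNum (M' ∪ S) : ℝ) :=
  augment_maximum_matching_general p hp hp1 ε hε t ht M M' hMm hMt hM'm hdisj hM'card
end
end

section
/- Let p ∈ (0,1), δ = p²/4, ε ≥ 0, and let opt > 0 be a real number. If α1, α3, α5 are nonnegative real numbers satisfying α3 + 2·α5 ≤ (1/2 − δ − ε)·opt and α1 + α3 + α5 ≥ (1/2 + δ + ε)·opt, then α1·p + α3·p² ≥ (p²/2)·opt. -/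
open scoped Classical symmDiff
open Real

noncomputable section

/-! Using `α1 + α3 + α5 ≥ (1/2 + δ + ε)·opt` to eliminate `α1`, the objective is at least
`p·(1/2 + δ + ε)·opt − p·(α3(1 − p) + α5)`, and the loss `α3(1 − p) + α5` is at most
`max (1 − p) (1/2)` times `α3 + 2α5 ≤ (1/2 − δ − ε)·opt`. -/

lemma mul_one_sub_add_le_max_mul {p a b : ℝ} (ha : 0 ≤ a) (hb : 0 ≤ b) :
    a * (1 - p) + b ≤ max (1 - p) (1 / 2) * (a + 2 * b) := by
  have hc₁ : 1 - p ≤ max (1 - p) (1 / 2) := le_max_left _ _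
  have hc₂ : 1 / 2 ≤ max (1 - p) (1 / 2) := le_max_right _ _
  linarith [mul_le_mul_of_nonneg_left hc₁ ha, mul_le_mul_of_nonneg_left hc₂ hb]

lemma half_le_sub_max_mul {p ε : ℝ} (hε : 0 ≤ ε) :
    p / 2 ≤ (1 / 2 + p ^ 2 / 4 + ε) - max (1 - p) (1 / 2) * (1 / 2 - p ^ 2 / 4 - ε) := by
  rcases le_total p (1 / 2) with hp | hp
  · rw [max_eq_left (by linarith)]
    nlinarith [mul_nonneg (add_nonneg (sq_nonneg p) hε) (by linarith : (0 : ℝ) ≤ 2 - p)]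
  · rw [max_eq_right (by linarith)]
    -- `1/4 + 3p²/8 − p/2 = ((3p − 2)² + 2) / 24`
    nlinarith [sq_nonneg (3 * p - 2)]

theorem lp_lower_bound_general (p : ℝ) (hp : 0 < p)
    (ε : ℝ) (hε : 0 ≤ ε) (opt : ℝ) (hopt : 0 < opt)
    (α1 α3 α5 : ℝ) (h3 : 0 ≤ α3) (h5 : 0 ≤ α5)
    (hc1 : α3 + 2 * α5 ≤ (1 / 2 - p ^ 2 / 4 - ε) * opt)
    (hc2 : (1 / 2 + p ^ 2 / 4 + ε) * opt ≤ α1 + α3 + α5) :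
    p ^ 2 / 2 * opt ≤ α1 * p + α3 * p ^ 2 := by
  set c := max (1 - p) (1 / 2)
  have hc : 0 ≤ c := le_max_of_le_right (by norm_num)
  have hloss : α3 * (1 - p) + α5 ≤ c * (α3 + 2 * α5) := mul_one_sub_add_le_max_mul h3 h5
  have hscalar := half_le_sub_max_mul (p := p) hε
  calc p ^ 2 / 2 * opt = p * (p / 2 * opt) := by ring
    _ ≤ p * (((1 / 2 + p ^ 2 / 4 + ε) - c * (1 / 2 - p ^ 2 / 4 - ε)) * opt) := by gcongr
    _ = p * ((1 / 2 + p ^ 2 / 4 + ε) * opt - c * ((1 / 2 - p ^ 2 / 4 - ε) * opt)) := by ring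
    _ ≤ p * ((α1 + α3 + α5) - c * (α3 + 2 * α5)) := by gcongr
    _ ≤ p * ((α1 + α3 + α5) - (α3 * (1 - p) + α5)) := by gcongr
    _ = α1 * p + α3 * p ^ 2 := by ring

theorem lp_lower_bound (p : ℝ) (hp : 0 < p) (hp1 : p < 1)
    (ε : ℝ) (hε : 0 ≤ ε) (opt : ℝ) (hopt : 0 < opt)
    (α1 α3 α5 : ℝ) (h1 : 0 ≤ α1) (h3 : 0 ≤ α3) (h5 : 0 ≤ α5)
    (hc1 : α3 + 2 * α5 ≤ (1 / 2 - p ^ 2 / 4 - ε) * opt)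
    (hc2 : (1 / 2 + p ^ 2 / 4 + ε) * opt ≤ α1 + α3 + α5) :
    p ^ 2 / 2 * opt ≤ α1 * p + α3 * p ^ 2 :=
  lp_lower_bound_general p hp ε hε opt hopt α1 α3 α5 h3 h5 hc1 hc2
end
end
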